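/- arXiv:2208.10616 — 12 statements merged into one kernel-verified Lean document; each statement's English description precedes it below -/
import Mathlib

section
/- One-step decrease inequality at ε-suboptimal points: let x, ỹ ∈ Ω, let g be a subgradient of f at x with ‖g‖ ≤ L, set q = max(1, L) and q' = max(1, ‖g‖), and suppose f(x) − f(ỹ) ≥ ε for some ε > 0. Then for any α ≥ 0 and any ζ with ζ̲ ≤ ζ ≤ ζ̄, ‖P(x − α·ζ·q'⁻¹·g) − ỹ‖² ≤ ‖x − ỹ‖² − 2·α·(ζ̲/q)·ε + α²·ζ̄². -/
open scoped RealInnerProductSpace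

/-- One-step decrease inequality at ε-suboptimal points. -/
theorem stmt_1 {E : Type*} [NormedAddCommGroup E] [InnerProductSpace ℝ E]
    (Ω : Set E) (hΩne : Ω.Nonempty) (hΩconv : Convex ℝ Ω)
    (P : E → E)
    (hPnonexp : ∀ u v : E, ‖P u - P v‖ ≤ ‖u - v‖)
    (hPmem : ∀ u : E, P u ∈ Ω)
    (hPfix : ∀ y ∈ Ω, P y = y)
    (f : E → ℝ) (hf : ConvexOn ℝ Set.univ f)
    (L : ℝ) (hL : 0 < L)
    (ζlow ζbar : ℝ) (hζlow : 0 < ζlow) (hζord : ζlow ≤ ζbar)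
    (x ytil : E) (hx : x ∈ Ω) (hytil : ytil ∈ Ω)
    (g : E) (hg : ∀ y : E, f x + ⟪g, y - x⟫ ≤ f y) (hgL : ‖g‖ ≤ L)
    (q q' : ℝ) (hq : q = max 1 L) (hq' : q' = max 1 ‖g‖)
    (ε : ℝ) (hε : 0 < ε) (hsub : ε ≤ f x - f ytil)
    (α ζ : ℝ) (hα : 0 ≤ α) (hζ1 : ζlow ≤ ζ) (hζ2 : ζ ≤ ζbar) :
    ‖P (x - (α * ζ * q'⁻¹) • g) - ytil‖ ^ 2 ≤
      ‖x - ytil‖ ^ 2 - 2 * α * (ζlow / q) * ε + α ^ 2 * ζbar ^ 2 := by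
  set s : ℝ := α * ζ * q'⁻¹ with hs
  have hq'1 : (1:ℝ) ≤ q' := by rw [hq']; exact le_max_left _ _
  have hq'pos : 0 < q' := lt_of_lt_of_le one_pos hq'1
  have hgq' : ‖g‖ ≤ q' := by rw [hq']; exact le_max_right _ _
  have hq'q : q' ≤ q := by rw [hq, hq']; exact max_le_max le_rfl hgL
  have hqpos : 0 < q := lt_of_lt_of_le hq'pos hq'q
  have hζpos : 0 < ζ := hζlow.trans_le hζ1
  have hspos : 0 ≤ s :=
    mul_nonneg (mul_nonneg hα hζpos.le) (inv_nonneg.mpr hq'pos.le)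
  -- projection step
  have h1 : ‖P (x - s • g) - ytil‖ ≤ ‖x - s • g - ytil‖ := by
    calc ‖P (x - s • g) - ytil‖ = ‖P (x - s • g) - P ytil‖ := by rw [hPfix ytil hytil]
      _ ≤ ‖x - s • g - ytil‖ := hPnonexp _ _
  have h1' : ‖P (x - s • g) - ytil‖ ^ 2 ≤ ‖x - s • g - ytil‖ ^ 2 := by
    have := norm_nonneg (P (x - s • g) - ytil)
    nlinarith
  -- expand
  have hexp : ‖x - s • g - ytil‖ ^ 2
      = ‖x - ytil‖ ^ 2 - 2 * s * ⟪g, x - ytil⟫ + s ^ 2 * ‖g‖ ^ 2 := by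
    have h := norm_sub_sq_real (x - ytil) (s • g)
    have heq : x - s • g - ytil = (x - ytil) - s • g := by abel
    rw [heq, h, real_inner_smul_right, real_inner_comm, norm_smul]
    simp [abs_mul, mul_pow, sq_abs]
    ring
  -- subgradient inequality
  have hinner : ε ≤ ⟪g, x - ytil⟫ := by
    have h := hg ytil
    have : ⟪g, ytil - x⟫ = -⟪g, x - ytil⟫ := by
      rw [show ytil - x = -(x - ytil) by abel, inner_neg_right]
    linarith [this ▸ h]
  have hdiv : ζlow / q ≤ ζ / q' := div_le_div₀ hζpos.le hζ1 hq'pos hq'q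
  have hA : s * ε ≤ s * ⟪g, x - ytil⟫ := mul_le_mul_of_nonneg_left hinner hspos
  have hs' : s = α * (ζ / q') := by rw [hs]; ring
  have hB : α * (ζlow / q) * ε ≤ s * ε := by
    have h2 : α * (ζlow / q) ≤ α * (ζ / q') := mul_le_mul_of_nonneg_left hdiv hα
    rw [hs']
    exact mul_le_mul_of_nonneg_right h2 hε.le
  have hsg : s * ‖g‖ ≤ α * ζbar := by
    have h3 : s * ‖g‖ ≤ s * q' := mul_le_mul_of_nonneg_left hgq' hspos
    have h4 : s * q' = α * ζ := by
      rw [hs]; field_simp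
    have h5 : α * ζ ≤ α * ζbar := mul_le_mul_of_nonneg_left hζ2 hα
    linarith
  have hC : s ^ 2 * ‖g‖ ^ 2 ≤ α ^ 2 * ζbar ^ 2 := by
    nlinarith [norm_nonneg g, hspos, mul_nonneg hspos (norm_nonneg g)]
  calc ‖P (x - s • g) - ytil‖ ^ 2 ≤ ‖x - s • g - ytil‖ ^ 2 := h1'
    _ = ‖x - ytil‖ ^ 2 - 2 * s * ⟪g, x - ytil⟫ + s ^ 2 * ‖g‖ ^ 2 := hexp
    _ ≤ ‖x - ytil‖ ^ 2 - 2 * α * (ζlow / q) * ε + α ^ 2 * ζbar ^ 2 := by nlinarith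
end

section
/- Boundedness of the scaled projected subgradient iterates for a fixed objective: let f : E → ℝ be convex and attain its minimum over Ω at a point x* ∈ Ω. Let (x_k)_{k≥1} be a sequence with x_1 ∈ Ω and, for every k ≥ 1, x_{k+1} = P(x_k − α_k·ζ_k·q_k⁻¹·g_k), where g_k is a subgradient of f at x_k, q_k = max(1, ‖g_k‖), 0 < ζ_k ≤ ζ̄, and 0 ≤ α_k ≤ C₂/k. Then for every k ≥ 1, ‖x_k − x*‖² ≤ ‖x_1 − x*‖² + ζ̄²·C₂²·(π²/6); in particular, the sequence (x_k) is bounded. -/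
open scoped RealInnerProductSpace

/-- Boundedness of the scaled projected subgradient iterates for a fixed objective. -/
theorem stmt_3 {E : Type*} [NormedAddCommGroup E] [InnerProductSpace ℝ E]
    (Ω : Set E) (hΩne : Ω.Nonempty) (hΩconv : Convex ℝ Ω)
    (P : E → E)
    (hPnonexp : ∀ u v : E, ‖P u - P v‖ ≤ ‖u - v‖)
    (hPmem : ∀ u : E, P u ∈ Ω)
    (hPfix : ∀ y ∈ Ω, P y = y)
    (C₂ ζbar : ℝ) (hC₂ : 0 < C₂) (hζbar : 0 < ζbar)
    (f : E → ℝ) (hf : ConvexOn ℝ Set.univ f)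
    (xstar : E) (hxstar : xstar ∈ Ω) (hopt : ∀ y ∈ Ω, f xstar ≤ f y)
    (x : ℕ → E) (g : ℕ → E) (α ζ : ℕ → ℝ)
    (hx1 : x 1 ∈ Ω)
    (hg : ∀ k, 1 ≤ k → ∀ y : E, f (x k) + ⟪g k, y - x k⟫ ≤ f y)
    (hζ : ∀ k, 1 ≤ k → 0 < ζ k ∧ ζ k ≤ ζbar)
    (hα : ∀ k, 1 ≤ k → 0 ≤ α k ∧ α k ≤ C₂ / k)
    (hupd : ∀ k, 1 ≤ k →
      x (k + 1) = P (x k - (α k * ζ k * (max 1 ‖g k‖)⁻¹) • g k)) :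
    (∀ k, 1 ≤ k →
      ‖x k - xstar‖ ^ 2 ≤ ‖x 1 - xstar‖ ^ 2 + ζbar ^ 2 * C₂ ^ 2 * (Real.pi ^ 2 / 6)) ∧
    ∃ M : ℝ, ∀ k, 1 ≤ k → ‖x k‖ ≤ M := by
  set D := ‖x 1 - xstar‖ ^ 2 with hD
  set A := ζbar ^ 2 * C₂ ^ 2 with hA
  have hAnn : 0 ≤ A := by positivity
  -- membership
  have hmem : ∀ k, 1 ≤ k → x k ∈ Ω := by
    intro k hk
    induction k with
    | zero => omega
    | succ n ih =>
      rcases Nat.lt_or_ge 1 (n+1) with h | h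
      · have hn : 1 ≤ n := by omega
        rw [hupd n hn]; exact hPmem _
      · have : n + 1 = 1 := by omega
        rw [this]; exact hx1
  -- main inductive bound
  have key : ∀ k, 1 ≤ k →
      ‖x k - xstar‖ ^ 2 ≤ D + A * ∑ j ∈ Finset.range k, (1 : ℝ) / (j : ℝ) ^ 2 := by
    intro k hk
    induction k, hk using Nat.le_induction with
    | base => simp [hD]
    | succ n hn ih =>
      set s := α n * ζ n * (max 1 ‖g n‖)⁻¹ with hs
      have hζn := hζ n hn
      have hαn := hα n hn
      have hq1 : (1 : ℝ) ≤ max 1 ‖g n‖ := le_max_left _ _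
      have hqpos : (0 : ℝ) < max 1 ‖g n‖ := lt_of_lt_of_le one_pos hq1
      have hsnn : 0 ≤ s := by
        have := hζn.1.le
        have := hαn.1
        positivity
      have hnpos : (0 : ℝ) < n := by exact_mod_cast hn
      -- bound s * ‖g n‖ ≤ ζbar * C₂ / n
      have hsg : s * ‖g n‖ ≤ ζbar * (C₂ / n) := by
        have h1 : s * ‖g n‖ = α n * ζ n * (‖g n‖ / max 1 ‖g n‖) := by
          rw [hs]; ring
        have h2 : ‖g n‖ / max 1 ‖g n‖ ≤ 1 :=
          (div_le_one hqpos).2 (le_max_right _ _)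
        calc s * ‖g n‖ = α n * ζ n * (‖g n‖ / max 1 ‖g n‖) := h1
          _ ≤ α n * ζ n * 1 := by
              apply mul_le_mul_of_nonneg_left h2
              exact mul_nonneg hαn.1 hζn.1.le
          _ = α n * ζ n := by ring
          _ ≤ (C₂ / n) * ζbar := by
              apply mul_le_mul hαn.2 hζn.2 hζn.1.le
              positivity
          _ = ζbar * (C₂ / n) := by ring
      -- one step
      have hstep : ‖x (n+1) - xstar‖ ^ 2 ≤ ‖x n - xstar‖ ^ 2 + A * ((1:ℝ) / (n:ℝ)^2) := by
        have hPx : ‖x (n+1) - xstar‖ ≤ ‖x n - xstar - s • g n‖ := by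
          calc ‖x (n+1) - xstar‖ = ‖P (x n - s • g n) - P xstar‖ := by
                rw [hupd n hn, hPfix xstar hxstar]
            _ ≤ ‖x n - s • g n - xstar‖ := hPnonexp _ _
            _ = ‖x n - xstar - s • g n‖ := by congr 1; abel
        have hsq : ‖x (n+1) - xstar‖ ^ 2 ≤ ‖x n - xstar - s • g n‖ ^ 2 := by
          apply pow_le_pow_left₀ (norm_nonneg _) hPx
        have hexp : ‖x n - xstar - s • g n‖ ^ 2 =
            ‖x n - xstar‖ ^ 2 - 2 * (s * ⟪g n, x n - xstar⟫) + s^2 * ‖g n‖ ^ 2 := by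
          rw [norm_sub_sq_real, real_inner_smul_right, norm_smul, real_inner_comm,
            Real.norm_of_nonneg hsnn]
          ring
        have hip : 0 ≤ ⟪g n, x n - xstar⟫ := by
          have h1 := hg n hn xstar
          have h2 := hopt (x n) (hmem n hn)
          have h3 : ⟪g n, xstar - x n⟫ ≤ 0 := by linarith
          have : ⟪g n, xstar - x n⟫ = - ⟪g n, x n - xstar⟫ := by
            rw [← inner_neg_right, neg_sub]
          linarith [this ▸ h3]
        have hsg2 : s ^ 2 * ‖g n‖ ^ 2 ≤ A * ((1:ℝ) / (n:ℝ)^2) := by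
          have h1 : (s * ‖g n‖) ^ 2 ≤ (ζbar * (C₂ / n)) ^ 2 := by
            apply pow_le_pow_left₀ (mul_nonneg hsnn (norm_nonneg _)) hsg
          calc s ^ 2 * ‖g n‖ ^ 2 = (s * ‖g n‖) ^ 2 := by ring
            _ ≤ (ζbar * (C₂ / n)) ^ 2 := h1
            _ = A * ((1:ℝ) / (n:ℝ)^2) := by
                rw [hA]; field_simp
        nlinarith [mul_nonneg hsnn hip]
      rw [Finset.sum_range_succ]
      calc ‖x (n+1) - xstar‖ ^ 2 ≤ ‖x n - xstar‖ ^ 2 + A * ((1:ℝ) / (n:ℝ)^2) := hstep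
        _ ≤ D + A * ∑ j ∈ Finset.range n, (1 : ℝ) / (j : ℝ) ^ 2 + A * ((1:ℝ) / (n:ℝ)^2) := by
            linarith
        _ = D + A * (∑ j ∈ Finset.range n, (1 : ℝ) / (j : ℝ) ^ 2 + 1 / (n:ℝ)^2) := by ring
  -- sum bound
  have hsum : ∀ k : ℕ, ∑ j ∈ Finset.range k, (1 : ℝ) / (j : ℝ) ^ 2 ≤ Real.pi ^ 2 / 6 := by
    intro k
    apply sum_le_hasSum _ _ hasSum_zeta_two
    intro i _
    positivity
  have main : ∀ k, 1 ≤ k → ‖x k - xstar‖ ^ 2 ≤ D + A * (Real.pi ^ 2 / 6) := by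
    intro k hk
    have := key k hk
    have h2 : A * ∑ j ∈ Finset.range k, (1 : ℝ) / (j : ℝ) ^ 2 ≤ A * (Real.pi ^ 2 / 6) :=
      mul_le_mul_of_nonneg_left (hsum k) hAnn
    linarith
  refine ⟨main, ⟨Real.sqrt (D + A * (Real.pi ^ 2 / 6)) + ‖xstar‖, ?_⟩⟩
  intro k hk
  have h1 : ‖x k - xstar‖ ≤ Real.sqrt (D + A * (Real.pi ^ 2 / 6)) := by
    rw [show ‖x k - xstar‖ = Real.sqrt (‖x k - xstar‖ ^ 2) by
      rw [Real.sqrt_sq (norm_nonneg _)]]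
    exact Real.sqrt_le_sqrt (main k hk)
  calc ‖x k‖ = ‖(x k - xstar) + xstar‖ := by congr 1; abel
    _ ≤ ‖x k - xstar‖ + ‖xstar‖ := norm_add_le _ _
    _ ≤ Real.sqrt (D + A * (Real.pi ^ 2 / 6)) + ‖xstar‖ := by linarith
end

section
/- Lower limit of function values for a fixed objective: let E = ℝⁿ (n-dimensional Euclidean space), let f : E → ℝ be convex and attain its minimum over Ω at a point x* ∈ Ω. Let (x_k)_{k≥1} be a sequence with x_1 ∈ Ω and, for every k ≥ 1, x_{k+1} = P(x_k − α_k·ζ_k·q_k⁻¹·g_k), where g_k is a subgradient of f at x_k, q_k = max(1, ‖g_k‖), ζ̲ ≤ ζ_k ≤ ζ̄, and 1/k ≤ α_k ≤ C₂/k. Then liminf_{k→∞} f(x_k) = f(x*) = min_{y ∈ Ω} f(y). -/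
open scoped RealInnerProductSpace

open Filter Finset

set_option maxHeartbeats 1600000 in
/-- Lower limit of function values for a fixed objective. -/
theorem stmt_4 {n : ℕ}
    (Ω : Set (EuclideanSpace ℝ (Fin n))) (hΩne : Ω.Nonempty)
    (hΩclosed : IsClosed Ω) (hΩconv : Convex ℝ Ω)
    (P : EuclideanSpace ℝ (Fin n) → EuclideanSpace ℝ (Fin n))
    (hPnonexp : ∀ u v, ‖P u - P v‖ ≤ ‖u - v‖)
    (hPmem : ∀ u, P u ∈ Ω)
    (hPfix : ∀ y ∈ Ω, P y = y)
    (C₂ ζlow ζbar : ℝ) (hC₂ : 0 < C₂) (hζlow : 0 < ζlow) (hζord : ζlow ≤ ζbar)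
    (f : EuclideanSpace ℝ (Fin n) → ℝ) (hf : ConvexOn ℝ Set.univ f)
    (xstar : EuclideanSpace ℝ (Fin n)) (hxstar : xstar ∈ Ω)
    (hopt : ∀ y ∈ Ω, f xstar ≤ f y)
    (x g : ℕ → EuclideanSpace ℝ (Fin n)) (α ζ : ℕ → ℝ)
    (hx1 : x 1 ∈ Ω)
    (hg : ∀ k : ℕ, 1 ≤ k → ∀ y, f (x k) + ⟪g k, y - x k⟫ ≤ f y)
    (hζ : ∀ k : ℕ, 1 ≤ k → ζlow ≤ ζ k ∧ ζ k ≤ ζbar)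
    (hα : ∀ k : ℕ, 1 ≤ k → 1 / (k : ℝ) ≤ α k ∧ α k ≤ C₂ / k)
    (hupd : ∀ k : ℕ, 1 ≤ k →
      x (k + 1) = P (x k - (α k * ζ k * (max 1 ‖g k‖)⁻¹) • g k)) :
    Filter.liminf (fun k => f (x k)) Filter.atTop = f xstar := by
  classical
  set c := C₂ * ζbar with hc
  have hζbar : 0 < ζbar := lt_of_lt_of_le hζlow hζord
  have hcpos : 0 < c := mul_pos hC₂ hζbar
  -- x k stays in Ω
  have xmem : ∀ k, 1 ≤ k → x k ∈ Ω := by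
    intro k hk
    induction k with
    | zero => omega
    | succ m ih =>
      rcases Nat.lt_or_ge m 1 with h1 | h1
      · interval_cases m
        exact hx1
      · rw [hupd m h1]
        exact hPmem _
  have fge : ∀ k, 1 ≤ k → f xstar ≤ f (x k) := fun k hk => hopt _ (xmem k hk)
  have hqpos : ∀ k : ℕ, (0:ℝ) < max 1 ‖g k‖ :=
    fun k => lt_of_lt_of_le one_pos (le_max_left _ _)
  have hαpos : ∀ k : ℕ, 1 ≤ k → 0 < α k := by
    intro k hk
    have hk' : (0:ℝ) < k := by exact_mod_cast hk
    exact lt_of_lt_of_le (by positivity) (hα k hk).1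
  have hζkpos : ∀ k : ℕ, 1 ≤ k → 0 < ζ k :=
    fun k hk => lt_of_lt_of_le hζlow (hζ k hk).1
  have htpos : ∀ k : ℕ, 1 ≤ k → 0 < α k * ζ k * (max 1 ‖g k‖)⁻¹ :=
    fun k hk => mul_pos (mul_pos (hαpos k hk) (hζkpos k hk)) (inv_pos.mpr (hqpos k))
  -- key one-step inequality
  have key : ∀ k : ℕ, 1 ≤ k →
      ‖x (k+1) - xstar‖^2 ≤ ‖x k - xstar‖^2
        - 2 * (α k * ζ k * (max 1 ‖g k‖)⁻¹) * (f (x k) - f xstar) + (c/(k:ℝ))^2 := by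
    intro k hk
    set t := α k * ζ k * (max 1 ‖g k‖)⁻¹ with htdef
    have ht : 0 < t := htpos k hk
    have hkpos : (0:ℝ) < k := by exact_mod_cast hk
    have h1 : ‖x (k+1) - xstar‖ ≤ ‖(x k - xstar) - t • g k‖ := by
      rw [hupd k hk]
      calc ‖P (x k - t • g k) - xstar‖
          = ‖P (x k - t • g k) - P xstar‖ := by rw [hPfix xstar hxstar]
        _ ≤ ‖(x k - t • g k) - xstar‖ := hPnonexp _ _
        _ = ‖(x k - xstar) - t • g k‖ := by congr 1; abel
    have h2 : ‖(x k - xstar) - t • g k‖^2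
        = ‖x k - xstar‖^2 - 2 * t * ⟪g k, x k - xstar⟫ + t^2 * ‖g k‖^2 := by
      rw [norm_sub_sq_real, real_inner_smul_right, norm_smul, real_inner_comm]
      simp [mul_pow, sq_abs]
      ring
    have hsub : f (x k) - f xstar ≤ ⟪g k, x k - xstar⟫ := by
      have h5 := hg k hk xstar
      have h3 : ⟪g k, xstar - x k⟫ = -⟪g k, x k - xstar⟫ := by
        rw [← inner_neg_right]
        congr 1
        abel
      rw [h3] at h5
      linarith
    have hgb : t * ‖g k‖ ≤ c / k := by
      have h4 : (max 1 ‖g k‖)⁻¹ * ‖g k‖ ≤ 1 := by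
        rw [← div_eq_inv_mul]
        exact div_le_one_of_le₀ (le_max_right _ _) (le_of_lt (hqpos k))
      have h5 : α k * ζ k ≤ (C₂ / k) * ζbar :=
        mul_le_mul (hα k hk).2 (hζ k hk).2 (hζkpos k hk).le (by positivity)
      have h6 : 0 ≤ α k * ζ k := mul_nonneg (hαpos k hk).le (hζkpos k hk).le
      calc t * ‖g k‖ = (α k * ζ k) * ((max 1 ‖g k‖)⁻¹ * ‖g k‖) := by rw [htdef]; ring
        _ ≤ (α k * ζ k) * 1 := mul_le_mul_of_nonneg_left h4 h6
        _ ≤ (C₂/k) * ζbar := by linarith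
        _ = c / k := by rw [hc]; ring
    have hsq : t^2 * ‖g k‖^2 ≤ (c/(k:ℝ))^2 := by
      have h0 : 0 ≤ t * ‖g k‖ := mul_nonneg ht.le (norm_nonneg _)
      calc t^2 * ‖g k‖^2 = (t * ‖g k‖)^2 := by ring
        _ ≤ (c/(k:ℝ))^2 := pow_le_pow_left₀ h0 hgb 2
    have h1' : ‖x (k+1) - xstar‖^2 ≤ ‖(x k - xstar) - t • g k‖^2 :=
      pow_le_pow_left₀ (norm_nonneg _) h1 2
    rw [h2] at h1'
    have h6 : 2 * t * (f (x k) - f xstar) ≤ 2 * t * ⟪g k, x k - xstar⟫ :=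
      mul_le_mul_of_nonneg_left hsub (by linarith)
    linarith
  -- telescoping
  have tele : ∀ K : ℕ, 1 ≤ K → ∀ m : ℕ, K ≤ m →
      ‖x m - xstar‖^2 ≤ ‖x K - xstar‖^2
        + ∑ k ∈ Finset.Ico K m,
            (-(2 * (α k * ζ k * (max 1 ‖g k‖)⁻¹) * (f (x k) - f xstar)) + (c/(k:ℝ))^2) := by
    intro K hK m hm
    induction m, hm using Nat.le_induction with
    | base => simp
    | succ m hm ih =>
      have hm1 : 1 ≤ m := le_trans hK hm
      rw [Finset.sum_Ico_succ_top hm]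
      have := key m hm1
      linarith
  -- summability of the error series
  have hsummable : Summable (fun k : ℕ => (c/(k:ℝ))^2) := by
    have h1 : Summable (fun k : ℕ => c^2 * ((1:ℝ)/(k:ℝ)^2)) :=
      (Real.summable_one_div_nat_pow.mpr one_lt_two).mul_left _
    exact h1.congr (fun k => by rw [div_pow, mul_one_div])
  set S := ∑' k : ℕ, (c/(k:ℝ))^2 with hSdef
  have hS0 : 0 ≤ S := tsum_nonneg (fun k => sq_nonneg _)
  have hpart : ∀ s : Finset ℕ, ∑ k ∈ s, (c/(k:ℝ))^2 ≤ S :=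
    fun s => Summable.sum_le_tsum s (fun i _ => sq_nonneg _) hsummable
  -- boundedness of the iterates
  have hDbound : ∀ m : ℕ, 1 ≤ m → ‖x m - xstar‖^2 ≤ ‖x 1 - xstar‖^2 + S := by
    intro m hm
    have h1 := tele 1 le_rfl m hm
    have h2 : ∑ k ∈ Finset.Ico 1 m,
        (-(2 * (α k * ζ k * (max 1 ‖g k‖)⁻¹) * (f (x k) - f xstar)) + (c/(k:ℝ))^2)
        ≤ ∑ k ∈ Finset.Ico 1 m, (c/(k:ℝ))^2 := by
      apply Finset.sum_le_sum
      intro k hk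
      have hk1 : 1 ≤ k := (Finset.mem_Ico.mp hk).1
      have h3 : 0 ≤ 2 * (α k * ζ k * (max 1 ‖g k‖)⁻¹) * (f (x k) - f xstar) := by
        have := htpos k hk1
        have := fge k hk1
        nlinarith
      linarith
    have h3 := hpart (Finset.Ico 1 m)
    linarith
  set R := Real.sqrt (‖x 1 - xstar‖^2 + S) with hRdef
  have hR0 : 0 ≤ R := Real.sqrt_nonneg _
  have hxball : ∀ m, 1 ≤ m → ‖x m - xstar‖ ≤ R := by
    intro m hm
    rw [hRdef, show ‖x m - xstar‖ = Real.sqrt (‖x m - xstar‖^2) by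
      rw [Real.sqrt_sq (norm_nonneg _)]]
    exact Real.sqrt_le_sqrt (hDbound m hm)
  -- maximum of f on a compact ball
  have hcont : Continuous f := hf.locallyLipschitz.continuous
  obtain ⟨z, hz, hzmax⟩ := (isCompact_closedBall xstar (R+1)).exists_isMaxOn
    ⟨xstar, Metric.mem_closedBall_self (by linarith)⟩ hcont.continuousOn
  have hxkball : ∀ k, 1 ≤ k → x k ∈ Metric.closedBall xstar (R+1) := by
    intro k hk
    rw [Metric.mem_closedBall, dist_eq_norm]
    linarith [hxball k hk]
  -- subgradient bound
  have hgbound : ∀ k, 1 ≤ k → ‖g k‖ ≤ f z - f xstar := by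
    intro k hk
    rcases eq_or_ne (g k) 0 with h0 | h0
    · rw [h0, norm_zero]
      have hzz : f (x k) ≤ f z := hzmax (hxkball k hk)
      linarith [fge k hk]
    · set u := ‖g k‖⁻¹ • g k with hu
      have hgk0 : (0:ℝ) < ‖g k‖ := norm_pos_iff.mpr h0
      have hun : ‖u‖ = 1 := by
        rw [hu, norm_smul, Real.norm_eq_abs, abs_of_pos (inv_pos.mpr hgk0),
          inv_mul_cancel₀ hgk0.ne']
      have hy : x k + u ∈ Metric.closedBall xstar (R+1) := by
        rw [Metric.mem_closedBall, dist_eq_norm]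
        have he : x k + u - xstar = (x k - xstar) + u := by abel
        rw [he]
        calc ‖(x k - xstar) + u‖ ≤ ‖x k - xstar‖ + ‖u‖ := norm_add_le _ _
          _ ≤ R + 1 := by rw [hun]; linarith [hxball k hk]
      have hinner : ⟪g k, (x k + u) - x k⟫ = ‖g k‖ := by
        have he : (x k + u) - x k = u := by abel
        rw [he, hu, real_inner_smul_right, real_inner_self_eq_norm_sq, sq,
          ← mul_assoc, inv_mul_cancel₀ hgk0.ne', one_mul]
      have h5 := hg k hk (x k + u)
      rw [hinner] at h5
      have h6 : f (x k + u) ≤ f z := hzmax hy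
      have h7 := fge k hk
      linarith
  set G := max 1 (f z - f xstar) with hG
  have hGpos : (0:ℝ) < G := lt_of_lt_of_le one_pos (le_max_left _ _)
  have hqG : ∀ k, 1 ≤ k → max 1 ‖g k‖ ≤ G :=
    fun k hk => max_le_max le_rfl (hgbound k hk)
  -- lower bound on the step
  have htlow : ∀ k : ℕ, 1 ≤ k →
      ζlow / ((k:ℝ) * G) ≤ α k * ζ k * (max 1 ‖g k‖)⁻¹ := by
    intro k hk
    have hkpos : (0:ℝ) < k := by exact_mod_cast hk
    have hqinv : G⁻¹ ≤ (max 1 ‖g k‖)⁻¹ :=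
      inv_anti₀ (hqpos k) (hqG k hk)
    have heq : ζlow / ((k:ℝ) * G) = (1/(k:ℝ)) * ζlow * G⁻¹ := by
      field_simp
    rw [heq]
    have h1 : (1/(k:ℝ)) * ζlow ≤ α k * ζ k :=
      mul_le_mul (hα k hk).1 (hζ k hk).1 hζlow.le (hαpos k hk).le
    have h2 : 0 ≤ (1/(k:ℝ)) * ζlow := by positivity
    calc (1/(k:ℝ)) * ζlow * G⁻¹ ≤ (α k * ζ k) * G⁻¹ :=
          mul_le_mul_of_nonneg_right h1 (by positivity)
      _ ≤ (α k * ζ k) * (max 1 ‖g k‖)⁻¹ :=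
          mul_le_mul_of_nonneg_left hqinv
            (mul_nonneg (hαpos k hk).le (hζkpos k hk).le)
  -- bounds on function values
  have hub : ∀ k, 1 ≤ k → f (x k) ≤ f z := fun k hk => hzmax (hxkball k hk)
  have hbddabove : IsBoundedUnder (· ≤ ·) atTop (fun k => f (x k)) :=
    isBoundedUnder_of_eventually_le (a := f z)
      (by filter_upwards [eventually_ge_atTop 1] with k hk using hub k hk)
  have hbddbelow : IsBoundedUnder (· ≥ ·) atTop (fun k => f (x k)) :=
    isBoundedUnder_of_eventually_ge (a := f xstar)
      (by filter_upwards [eventually_ge_atTop 1] with k hk using fge k hk)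
  have hlow : f xstar ≤ liminf (fun k => f (x k)) atTop := by
    apply le_liminf_of_le hbddabove.isCoboundedUnder_ge
    filter_upwards [eventually_ge_atTop 1] with k hk using fge k hk
  have hup : liminf (fun k => f (x k)) atTop ≤ f xstar := by
    by_contra hlt
    push_neg at hlt
    set L := liminf (fun k => f (x k)) atTop with hL
    set ε := (L - f xstar)/2 with hε
    have hεpos : 0 < ε := by rw [hε]; linarith
    have hev : ∀ᶠ k in atTop, f xstar + ε < f (x k) := by
      have h1 : f xstar + ε < L := by rw [hε]; linarith
      exact eventually_lt_of_lt_liminf h1 hbddbelow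
    rw [eventually_atTop] at hev
    obtain ⟨K0, hK0⟩ := hev
    set K := max K0 1 with hK
    have hK1 : 1 ≤ K := le_max_right _ _
    set a := 2 * (ζlow / G) * ε with ha
    have hapos : 0 < a := by positivity
    set B := ‖x K - xstar‖^2 + S with hB
    have hbound : ∀ m, K ≤ m → a * ∑ k ∈ Finset.Ico K m, (1:ℝ)/(k:ℝ) ≤ B := by
      intro m hm
      have h1 := tele K hK1 m hm
      have h2 : ∑ k ∈ Finset.Ico K m,
          (-(2 * (α k * ζ k * (max 1 ‖g k‖)⁻¹) * (f (x k) - f xstar)) + (c/(k:ℝ))^2)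
          ≤ ∑ k ∈ Finset.Ico K m, (-(a * ((1:ℝ)/(k:ℝ))) + (c/(k:ℝ))^2) := by
        apply Finset.sum_le_sum
        intro k hk
        have hk1 : 1 ≤ k := le_trans hK1 (Finset.mem_Ico.mp hk).1
        have hkK0 : K0 ≤ k := le_trans (le_max_left _ _) (Finset.mem_Ico.mp hk).1
        have hfk : f xstar + ε < f (x k) := hK0 k hkK0
        have htl := htlow k hk1
        have hkpos : (0:ℝ) < k := by exact_mod_cast hk1
        have h3 : a * ((1:ℝ)/(k:ℝ)) = 2 * (ζlow / ((k:ℝ) * G)) * ε := by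
          rw [ha]; field_simp
        have h4 : a * ((1:ℝ)/(k:ℝ)) ≤
            2 * (α k * ζ k * (max 1 ‖g k‖)⁻¹) * (f (x k) - f xstar) := by
          rw [h3]
          have h5 : 0 ≤ ζlow / ((k:ℝ) * G) := by positivity
          nlinarith [htpos k hk1]
        linarith
      have h3 : ∑ k ∈ Finset.Ico K m, (-(a * ((1:ℝ)/(k:ℝ))) + (c/(k:ℝ))^2)
          = -(a * ∑ k ∈ Finset.Ico K m, (1:ℝ)/(k:ℝ))
            + ∑ k ∈ Finset.Ico K m, (c/(k:ℝ))^2 := by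
        rw [Finset.sum_add_distrib, Finset.sum_neg_distrib, Finset.mul_sum]
      have h4 := hpart (Finset.Ico K m)
      have h5 : (0:ℝ) ≤ ‖x m - xstar‖^2 := sq_nonneg _
      rw [h3] at h2
      rw [hB]
      linarith
    -- divergence of the harmonic series
    have hdiv : Tendsto (fun m => ∑ k ∈ Finset.Ico K m, (1:ℝ)/(k:ℝ)) atTop atTop := by
      have h1 : Tendsto (fun m : ℕ => ∑ k ∈ Finset.range m, (1:ℝ)/(k:ℝ)) atTop atTop := by
        rw [← tendsto_add_atTop_iff_nat 1]
        have h2 : (fun m : ℕ => ∑ k ∈ Finset.range (m+1), (1:ℝ)/(k:ℝ))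
            = fun m : ℕ => ∑ i ∈ Finset.range m, (1:ℝ)/((i:ℝ)+1) := by
          funext m
          rw [Finset.sum_range_succ']
          push_cast
          simp
        rw [h2]
        exact Real.tendsto_sum_range_one_div_nat_succ_atTop
      have h3 : Tendsto (fun m : ℕ =>
          (∑ k ∈ Finset.range m, (1:ℝ)/(k:ℝ)) + (-∑ k ∈ Finset.range K, (1:ℝ)/(k:ℝ)))
          atTop atTop := tendsto_atTop_add_const_right _ _ h1
      apply h3.congr'
      filter_upwards [eventually_ge_atTop K] with m hm
      rw [Finset.sum_Ico_eq_sub _ hm]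
      ring
    obtain ⟨m, hm1, hm2⟩ : ∃ m, K ≤ m ∧ B/a + 1 ≤ ∑ k ∈ Finset.Ico K m, (1:ℝ)/(k:ℝ) := by
      have := (hdiv.eventually_ge_atTop (B/a + 1)).and (eventually_ge_atTop K)
      rw [eventually_atTop] at this
      obtain ⟨m, hm⟩ := this
      exact ⟨m, (hm m le_rfl).2, (hm m le_rfl).1⟩
    have h6 := hbound m hm1
    have h7 : a * (B/a + 1) ≤ a * ∑ k ∈ Finset.Ico K m, (1:ℝ)/(k:ℝ) :=
      mul_le_mul_of_nonneg_left hm2 hapos.le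
    have h8 : a * (B/a + 1) = B + a := by field_simp
    linarith
  exact le_antisymm hup hlow
end

section
/- Convergence of the scaled projected subgradient method for a fixed objective (deterministic core of Theorem 3, used as the fixed-sample step of Theorem 1): let E = ℝⁿ (n-dimensional Euclidean space), let f : E → ℝ be convex and attain its minimum over Ω. Let (x_k)_{k≥1} be a sequence with x_1 ∈ Ω and, for every k ≥ 1, x_{k+1} = P(x_k − α_k·ζ_k·q_k⁻¹·g_k), where g_k is a subgradient of f at x_k, q_k = max(1, ‖g_k‖), ζ̲ ≤ ζ_k ≤ ζ̄, and 1/k ≤ α_k ≤ C₂/k. Then there exists a point x̃ ∈ Ω with f(x̃) = min_{y ∈ Ω} f(y) such that lim_{k→∞} x_k = x̃; consequently lim_{k→∞} ‖x_{k+1} − x_k‖ = 0. -/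
/-!
For a minimizer `z`, nonexpansiveness of `P` and the subgradient inequality give
`‖x_{k+1} - z‖² ≤ ‖x_k - z‖² - 2 s_k (f x_k - f z) + β_k²`, where `β_k = α_k ζ_k` and
`s_k = β_k / max 1 ‖g_k‖`, so that `s_k ‖g_k‖ ≤ β_k`. As `∑ β_k² < ∞`, the distance from `x_k`
to every minimizer converges and `∑ s_k (f x_k - f z) < ∞`. The iterates are therefore bounded,
hence so are the subgradients, so `s_k` is comparable to `β_k` and `∑ s_k = ∞`. Thus `f x_k` comes
arbitrarily close to the minimum infinitely often, and by compactness a subsequence converges to a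
minimizer `x̃`. Since `‖x_k - x̃‖` converges and tends to `0` along that subsequence, `x_k → x̃`.
-/

open scoped RealInnerProductSpace
open Filter Topology Metric

section RobbinsSiegmund

variable {a b c : ℕ → ℝ}

theorem sum_range_add_le_add_sum_range (h : ∀ k, a (k + 1) ≤ a k - b k + c k) (K : ℕ) :
    ∑ j ∈ Finset.range K, b j + a K ≤ a 0 + ∑ j ∈ Finset.range K, c j := by
  induction K with
  | zero => simp
  | succ K ih =>
    rw [Finset.sum_range_succ, Finset.sum_range_succ]
    linarith [h K]

theorem summable_of_le_sub_add (ha : ∀ k, 0 ≤ a k) (hb : ∀ k, 0 ≤ b k) (hc : ∀ k, 0 ≤ c k)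
    (hcs : Summable c) (h : ∀ k, a (k + 1) ≤ a k - b k + c k) : Summable b :=
  summable_of_sum_range_le (c := a 0 + ∑' j, c j) hb fun K => by
    linarith [sum_range_add_le_add_sum_range h K, ha K,
      hcs.sum_le_tsum (Finset.range K) fun j _ => hc j]

theorem exists_tendsto_of_le_sub_add (ha : ∀ k, 0 ≤ a k) (hb : ∀ k, 0 ≤ b k) (hc : ∀ k, 0 ≤ c k)
    (hcs : Summable c) (h : ∀ k, a (k + 1) ≤ a k - b k + c k) :
    ∃ l, Tendsto a atTop (𝓝 l) := by
  set e : ℕ → ℝ := fun k => a k - ∑ j ∈ Finset.range k, c j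
  have he_anti : Antitone e := antitone_nat_of_succ_le fun k => by
    simp only [e, Finset.sum_range_succ]
    linarith [h k, hb k]
  have he_bdd : BddBelow (Set.range e) := ⟨-∑' j, c j, by
    rintro _ ⟨k, rfl⟩
    linarith [ha k, hcs.sum_le_tsum (Finset.range k) fun j _ => hc j]⟩
  refine ⟨(⨅ k, e k) + ∑' j, c j, ?_⟩
  convert (tendsto_atTop_ciInf he_anti he_bdd).add hcs.hasSum.tendsto_sum_nat using 1
  ext k
  simp only [e, sub_add_cancel]

end RobbinsSiegmund

theorem frequently_lt_of_summable_mul {s d : ℕ → ℝ} (hs : ∀ k, 0 ≤ s k) (hs_not : ¬ Summable s)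
    (hsd : Summable fun k => s k * d k) {ε : ℝ} (hε : 0 < ε) : ∃ᶠ k in atTop, d k < ε := by
  by_contra h
  refine hs_not ((hsd.mul_left ε⁻¹).of_norm_bounded_eventually_nat ?_)
  filter_upwards [not_frequently.1 h] with k hk
  rw [Real.norm_of_nonneg (hs k), le_inv_mul_iff₀ hε, mul_comm]
  exact mul_le_mul_of_nonneg_left (not_lt.1 hk) (hs k)

theorem summable_sq_of_le_div_succ {β : ℕ → ℝ} {C : ℝ} (hβ : ∀ k, 0 ≤ β k)
    (hβC : ∀ k, β k ≤ C / ((k + 1 : ℕ) : ℝ)) : Summable fun k => β k ^ 2 := by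
  have hsum : Summable fun k : ℕ => C ^ 2 * (1 / ((k + 1 : ℕ) : ℝ) ^ 2) :=
    ((summable_nat_add_iff 1).2 (Real.summable_one_div_nat_pow.2 one_lt_two)).mul_left _
  refine hsum.of_nonneg_of_le (fun k => sq_nonneg _) fun k => ?_
  calc β k ^ 2 ≤ (C / ((k + 1 : ℕ) : ℝ)) ^ 2 := pow_le_pow_left₀ (hβ k) (hβC k) 2
    _ = _ := by rw [div_pow, mul_one_div]

theorem not_summable_of_div_succ_le {β : ℕ → ℝ} {c : ℝ} (hc : 0 < c)
    (hβc : ∀ k, c / ((k + 1 : ℕ) : ℝ) ≤ β k) : ¬ Summable β := fun hβ => by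
  have hsum : Summable fun k : ℕ => c * (1 / ((k + 1 : ℕ) : ℝ)) :=
    hβ.of_nonneg_of_le (fun k => by positivity) fun k => by
      simpa only [mul_one_div] using hβc k
  exact Real.not_summable_one_div_natCast
    ((summable_nat_add_iff 1).1 ((summable_mul_left_iff hc.ne').1 hsum))

theorem mul_mem_Icc_div_of_mem_Icc_div {k a z lo hi C : ℝ} (hk : 0 < k) (hlo : 0 < lo)
    (ha : a ∈ Set.Icc (1 / k) (C / k)) (hz : z ∈ Set.Icc lo hi) :
    a * z ∈ Set.Icc (lo / k) (C * hi / k) := by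
  have ha0 : 0 ≤ a := (one_div_pos.2 hk).le.trans ha.1
  constructor
  · calc lo / k = 1 / k * lo := by ring
      _ ≤ a * z := mul_le_mul ha.1 hz.1 hlo.le ha0
  · calc a * z ≤ C / k * hi := mul_le_mul ha.2 hz.2 (hlo.le.trans hz.1) (ha0.trans ha.2)
      _ = C * hi / k := by ring

theorem exists_mem_le_tendsto_subseq {X : Type*} [PseudoMetricSpace X] {K Ω : Set X}
    (hK : IsCompact K) (hΩ : IsClosed Ω) {f : X → ℝ} (hf : Continuous f) {x : ℕ → X}
    (hxK : ∀ k, x k ∈ K) (hxΩ : ∀ k, x k ∈ Ω) {m : ℝ}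
    (hfreq : ∀ ε > 0, ∃ᶠ k in atTop, f (x k) < m + ε) :
    ∃ a ∈ Ω, f a ≤ m ∧ ∃ φ : ℕ → ℕ, StrictMono φ ∧ Tendsto (x ∘ φ) atTop (𝓝 a) := by
  obtain ⟨φ, hφ, hφm⟩ := extraction_forall_of_frequently fun n : ℕ =>
    hfreq (1 / ((n : ℝ) + 1)) Nat.one_div_pos_of_nat
  obtain ⟨a, -, ψ, hψ, hlim⟩ := hK.tendsto_subseq fun n => hxK (φ n)
  refine ⟨a, hΩ.mem_of_tendsto hlim (.of_forall fun n => hxΩ _), ?_, φ ∘ ψ, hφ.comp hψ, hlim⟩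
  have hm : Tendsto (fun n => m + 1 / ((ψ n : ℝ) + 1)) atTop (𝓝 (m + 0)) :=
    (tendsto_one_div_add_atTop_nhds_zero_nat.comp hψ.tendsto_atTop).const_add m
  rw [add_zero] at hm
  exact le_of_tendsto_of_tendsto' ((hf.tendsto a).comp hlim) hm fun n => (hφm (ψ n)).le

theorem tendsto_of_tendsto_dist_of_tendsto_subseq {X : Type*} [PseudoMetricSpace X]
    {u : ℕ → X} {a : X} {l : ℝ} (hl : Tendsto (fun k => dist (u k) a) atTop (𝓝 l))
    {φ : ℕ → ℕ} (hφ : StrictMono φ) (hsub : Tendsto (u ∘ φ) atTop (𝓝 a)) :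
    Tendsto u atTop (𝓝 a) := by
  have hl0 : l = 0 :=
    tendsto_nhds_unique (hl.comp hφ.tendsto_atTop) (tendsto_iff_dist_tendsto_zero.1 hsub)
  exact tendsto_iff_dist_tendsto_zero.2 (hl0 ▸ hl)

section Subgradient

variable {E : Type*} [NormedAddCommGroup E] [InnerProductSpace ℝ E]

def IsSubgradient (f : E → ℝ) (x g : E) : Prop :=
  ∀ y, f x + ⟪g, y - x⟫ ≤ f y

theorem IsSubgradient.norm_le {f : E → ℝ} {x g : E} {M : ℝ} (hg : IsSubgradient f x g)
    (hM : ∀ y ∈ closedBall x 1, f y ≤ f x + M) : ‖g‖ ≤ M := by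
  rcases eq_or_ne g 0 with rfl | hg0
  · simpa using hM x (mem_closedBall_self zero_le_one)
  have hy : x + ‖g‖⁻¹ • g ∈ closedBall x 1 := by
    rw [mem_closedBall, dist_self_add_left, norm_smul, norm_inv, norm_norm,
      inv_mul_cancel₀ (norm_ne_zero_iff.2 hg0)]
  have hinner : ⟪g, x + ‖g‖⁻¹ • g - x⟫ = ‖g‖ := by
    rw [add_sub_cancel_left, real_inner_smul_right, real_inner_self_eq_norm_sq,
      sq, inv_mul_cancel_left₀ (norm_ne_zero_iff.2 hg0)]
  linarith [hg (x + ‖g‖⁻¹ • g), hM _ hy]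

theorem exists_forall_norm_le_of_isSubgradient [ProperSpace E] {f : E → ℝ} (hf : Continuous f)
    (c : E) (R : ℝ) : ∃ G, ∀ x ∈ closedBall c R, ∀ g, IsSubgradient f x g → ‖g‖ ≤ G := by
  obtain ⟨C, hC⟩ := (isCompact_closedBall c (R + 1)).exists_bound_of_continuousOn hf.continuousOn
  refine ⟨2 * C, fun x hx g hg => hg.norm_le fun y hy => ?_⟩
  have hxR : x ∈ closedBall c (R + 1) := closedBall_subset_closedBall (by linarith) hx
  have hyR : y ∈ closedBall c (R + 1) := by
    rw [mem_closedBall] at hx hy ⊢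
    linarith [dist_triangle y x c]
  linarith [(abs_le.1 (hC x hxR)).1, (abs_le.1 (hC y hyR)).2]

theorem IsSubgradient.norm_projection_scaled_step_sub_sq_le {f : E → ℝ} {x g z : E} {β : ℝ}
    {P : E → E} (hP : ∀ u v, ‖P u - P v‖ ≤ ‖u - v‖) (hz : P z = z) (hg : IsSubgradient f x g)
    (hβ : 0 ≤ β) :
    ‖P (x - (β * (max 1 ‖g‖)⁻¹) • g) - z‖ ^ 2 ≤
      ‖x - z‖ ^ 2 - 2 * (β * (max 1 ‖g‖)⁻¹) * (f x - f z) + β ^ 2 := by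
  set s := β * (max 1 ‖g‖)⁻¹
  have hs : 0 ≤ s := by positivity
  have hsg : s * ‖g‖ ≤ β := by
    rw [mul_assoc]
    exact mul_le_of_le_one_right hβ (inv_mul_le_one_of_le₀ (le_max_right _ _) (by positivity))
  have hdescent : f x - f z ≤ ⟪g, x - z⟫ := by
    have := hg z
    rw [← neg_sub x z, inner_neg_right] at this
    linarith
  calc ‖P (x - s • g) - z‖ ^ 2 ≤ ‖(x - z) - s • g‖ ^ 2 := by
        gcongr
        calc ‖P (x - s • g) - z‖ = ‖P (x - s • g) - P z‖ := by rw [hz]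
          _ ≤ ‖(x - z) - s • g‖ := (hP _ _).trans_eq (by rw [sub_right_comm])
    _ = ‖x - z‖ ^ 2 - 2 * s * ⟪g, x - z⟫ + (s * ‖g‖) ^ 2 := by
        rw [norm_sub_sq_real, real_inner_smul_right, norm_smul, real_inner_comm,
          Real.norm_of_nonneg hs]
        ring
    _ ≤ _ := by gcongr

end Subgradient

theorem tendsto_of_scaled_projected_subgradient {E : Type*} [NormedAddCommGroup E]
    [InnerProductSpace ℝ E] [ProperSpace E] {Ω : Set E} (hΩ : IsClosed Ω) {P : E → E}
    (hP : ∀ u v, ‖P u - P v‖ ≤ ‖u - v‖) (hPmem : ∀ u, P u ∈ Ω) (hPfix : ∀ y ∈ Ω, P y = y)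
    {f : E → ℝ} (hf : Continuous f) {xs : E} (hxs : xs ∈ Ω) (hmin : ∀ y ∈ Ω, f xs ≤ f y)
    {x g : ℕ → E} {β : ℕ → ℝ} (hx0 : x 0 ∈ Ω) (hg : ∀ k, IsSubgradient f (x k) (g k))
    (hβ : ∀ k, 0 ≤ β k) (hβsq : Summable fun k => β k ^ 2) (hβ_not : ¬ Summable β)
    (hupd : ∀ k, x (k + 1) = P (x k - (β k * (max 1 ‖g k‖)⁻¹) • g k)) :
    ∃ xtil ∈ Ω, (∀ y ∈ Ω, f xtil ≤ f y) ∧ Tendsto x atTop (𝓝 xtil) := by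
  set s : ℕ → ℝ := fun k => β k * (max 1 ‖g k‖)⁻¹
  have hs : ∀ k, 0 ≤ s k := fun k => mul_nonneg (hβ k) (by positivity)
  have hmem : ∀ k, x k ∈ Ω := fun
    | 0 => hx0
    | k + 1 => hupd k ▸ hPmem _
  have hfejer : ∀ z ∈ Ω, (∀ y ∈ Ω, f z ≤ f y) →
      (∃ l, Tendsto (fun k => dist (x k) z) atTop (𝓝 l)) ∧
        Summable fun k => 2 * s k * (f (x k) - f z) := by
    intro z hz hzmin
    have hb : ∀ k, 0 ≤ 2 * s k * (f (x k) - f z) := fun k =>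
      mul_nonneg (mul_nonneg zero_le_two (hs k)) (sub_nonneg.2 (hzmin _ (hmem k)))
    have hstep : ∀ k, ‖x (k + 1) - z‖ ^ 2 ≤ ‖x k - z‖ ^ 2 - 2 * s k * (f (x k) - f z) + β k ^ 2 :=
      fun k => hupd k ▸ (hg k).norm_projection_scaled_step_sub_sq_le hP (hPfix z hz) (hβ k)
    have hsq := fun k => sq_nonneg ‖x k - z‖
    obtain ⟨l, hl⟩ := exists_tendsto_of_le_sub_add hsq hb (fun k => sq_nonneg (β k)) hβsq hstep
    refine ⟨⟨√l, ?_⟩, summable_of_le_sub_add hsq hb (fun k => sq_nonneg (β k)) hβsq hstep⟩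
    simpa only [dist_eq_norm, Real.sqrt_sq (norm_nonneg _)] using hl.sqrt
  obtain ⟨⟨l, hl⟩, hsum⟩ := hfejer xs hxs hmin
  obtain ⟨R, hR⟩ := hl.bddAbove_range
  have hball : ∀ k, x k ∈ closedBall xs R := fun k => hR ⟨k, rfl⟩
  obtain ⟨G, hG⟩ := exists_forall_norm_le_of_isSubgradient hf xs R
  have hs_not : ¬ Summable fun k => 2 * s k := fun hs_sum => hβ_not <|
    (summable_mul_right_iff (by positivity : 2 * (max 1 G)⁻¹ ≠ 0)).1 <|
      hs_sum.of_nonneg_of_le (fun k => mul_nonneg (hβ k) (by positivity)) fun k => by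
        have hq : (max 1 G)⁻¹ ≤ (max 1 ‖g k‖)⁻¹ :=
          inv_anti₀ (by positivity) (max_le_max_left 1 (hG _ (hball k) _ (hg k)))
        linarith [mul_le_mul_of_nonneg_left hq (hβ k)]
  obtain ⟨xtil, hxtil, hfxtil, φ, hφ, hsub⟩ :=
    exists_mem_le_tendsto_subseq (isCompact_closedBall xs R) hΩ hf hball hmem fun ε hε =>
      (frequently_lt_of_summable_mul (d := fun k => f (x k) - f xs)
        (fun k => mul_nonneg zero_le_two (hs k)) hs_not hsum hε).mono
        fun k hk => sub_lt_iff_lt_add'.1 hk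
  have hxtil_min : ∀ y ∈ Ω, f xtil ≤ f y := fun y hy => hfxtil.trans (hmin y hy)
  obtain ⟨⟨l', hl'⟩, -⟩ := hfejer xtil hxtil hxtil_min
  exact ⟨xtil, hxtil, hxtil_min, tendsto_of_tendsto_dist_of_tendsto_subseq hl' hφ hsub⟩

theorem stmt_5_general {n : ℕ}
    (Ω : Set (EuclideanSpace ℝ (Fin n)))
    (hΩclosed : IsClosed Ω)
    (P : EuclideanSpace ℝ (Fin n) → EuclideanSpace ℝ (Fin n))
    (hPnonexp : ∀ u v, ‖P u - P v‖ ≤ ‖u - v‖)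
    (hPmem : ∀ u, P u ∈ Ω)
    (hPfix : ∀ y ∈ Ω, P y = y)
    (C₂ ζlow ζbar : ℝ) (hζlow : 0 < ζlow)
    (f : EuclideanSpace ℝ (Fin n) → ℝ) (hf : ConvexOn ℝ Set.univ f)
    (hattain : ∃ xstar ∈ Ω, ∀ y ∈ Ω, f xstar ≤ f y)
    (x g : ℕ → EuclideanSpace ℝ (Fin n)) (α ζ : ℕ → ℝ)
    (hx1 : x 1 ∈ Ω)
    (hg : ∀ k : ℕ, 1 ≤ k → ∀ y, f (x k) + ⟪g k, y - x k⟫ ≤ f y)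
    (hζ : ∀ k : ℕ, 1 ≤ k → ζlow ≤ ζ k ∧ ζ k ≤ ζbar)
    (hα : ∀ k : ℕ, 1 ≤ k → 1 / (k : ℝ) ≤ α k ∧ α k ≤ C₂ / k)
    (hupd : ∀ k : ℕ, 1 ≤ k →
      x (k + 1) = P (x k - (α k * ζ k * (max 1 ‖g k‖)⁻¹) • g k)) :
    (∃ xtil ∈ Ω, (∀ y ∈ Ω, f xtil ≤ f y) ∧
      Filter.Tendsto x Filter.atTop (nhds xtil)) ∧
    Filter.Tendsto (fun k => ‖x (k + 1) - x k‖) Filter.atTop (nhds 0) := by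
  obtain ⟨xs, hxs, hmin⟩ := hattain
  have hβ : ∀ k : ℕ,
      α (k + 1) * ζ (k + 1) ∈ Set.Icc (ζlow / (k + 1 : ℕ)) (C₂ * ζbar / (k + 1 : ℕ)) := fun k =>
    mul_mem_Icc_div_of_mem_Icc_div (by positivity) hζlow (hα _ k.succ_pos) (hζ _ k.succ_pos)
  have hβ0 : ∀ k : ℕ, 0 ≤ α (k + 1) * ζ (k + 1) := fun k =>
    (by positivity : 0 ≤ ζlow / (k + 1 : ℕ)).trans (hβ k).1
  obtain ⟨xtil, hxtil, hxtil_min, hlim⟩ :=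
    tendsto_of_scaled_projected_subgradient (x := fun k => x (k + 1)) (g := fun k => g (k + 1))
      hΩclosed hPnonexp hPmem hPfix hf.locallyLipschitz.continuous hxs hmin hx1
      (fun k => hg _ k.succ_pos) hβ0 (summable_sq_of_le_div_succ hβ0 fun k => (hβ k).2)
      (not_summable_of_div_succ_le hζlow fun k => (hβ k).1) (fun k => hupd _ k.succ_pos)
  have hx : Tendsto x atTop (𝓝 xtil) := (tendsto_add_atTop_iff_nat 1).1 hlim
  refine ⟨⟨xtil, hxtil, hxtil_min, hx⟩, ?_⟩
  simpa using (hlim.sub hx).norm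

/-- Convergence of the scaled projected subgradient method for a fixed objective. -/
theorem stmt_5 {n : ℕ}
    (Ω : Set (EuclideanSpace ℝ (Fin n))) (hΩne : Ω.Nonempty)
    (hΩclosed : IsClosed Ω) (hΩconv : Convex ℝ Ω)
    (P : EuclideanSpace ℝ (Fin n) → EuclideanSpace ℝ (Fin n))
    (hPnonexp : ∀ u v, ‖P u - P v‖ ≤ ‖u - v‖)
    (hPmem : ∀ u, P u ∈ Ω)
    (hPfix : ∀ y ∈ Ω, P y = y)
    (C₂ ζlow ζbar : ℝ) (hC₂ : 0 < C₂) (hζlow : 0 < ζlow) (hζord : ζlow ≤ ζbar)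
    (f : EuclideanSpace ℝ (Fin n) → ℝ) (hf : ConvexOn ℝ Set.univ f)
    (hattain : ∃ xstar ∈ Ω, ∀ y ∈ Ω, f xstar ≤ f y)
    (x g : ℕ → EuclideanSpace ℝ (Fin n)) (α ζ : ℕ → ℝ)
    (hx1 : x 1 ∈ Ω)
    (hg : ∀ k : ℕ, 1 ≤ k → ∀ y, f (x k) + ⟪g k, y - x k⟫ ≤ f y)
    (hζ : ∀ k : ℕ, 1 ≤ k → ζlow ≤ ζ k ∧ ζ k ≤ ζbar)
    (hα : ∀ k : ℕ, 1 ≤ k → 1 / (k : ℝ) ≤ α k ∧ α k ≤ C₂ / k)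
    (hupd : ∀ k : ℕ, 1 ≤ k →
      x (k + 1) = P (x k - (α k * ζ k * (max 1 ‖g k‖)⁻¹) • g k)) :
    (∃ xtil ∈ Ω, (∀ y ∈ Ω, f xtil ≤ f y) ∧
      Filter.Tendsto x Filter.atTop (nhds xtil)) ∧
    Filter.Tendsto (fun k => ‖x (k + 1) - x k‖) Filter.atTop (nhds 0) :=
  stmt_5_general Ω hΩclosed P hPnonexp hPmem hPfix C₂ ζlow ζbar hζlow f hf hattain x g α ζ hx1 hg hζ
    hα hupd
end

section
/- Quasi-Fejér convergence lemma: let (x_k)_{k≥0} be a sequence in a real inner product space E, let x̃ ∈ E, and let (b_k)_{k≥0} be nonnegative reals with ∑_{k=0}^∞ b_k < ∞. Suppose ‖x_{k+1} − x̃‖² ≤ ‖x_k − x̃‖² + b_k for all k, and suppose some subsequence (x_{k_i})_{i∈ℕ} converges to x̃. Then the whole sequence (x_k) converges to x̃. -/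
/-- Quasi-Fejér convergence lemma. -/
theorem stmt_6 {E : Type*} [NormedAddCommGroup E] [InnerProductSpace ℝ E]
    (x : ℕ → E) (xtil : E) (b : ℕ → ℝ)
    (hb0 : ∀ k, 0 ≤ b k) (hbsum : Summable b)
    (hfejer : ∀ k, ‖x (k + 1) - xtil‖ ^ 2 ≤ ‖x k - xtil‖ ^ 2 + b k)
    (φ : ℕ → ℕ) (hφ : StrictMono φ)
    (hsub : Filter.Tendsto (fun i => x (φ i)) Filter.atTop (nhds xtil)) :
    Filter.Tendsto x Filter.atTop (nhds xtil) := by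
  set a : ℕ → ℝ := fun n => ‖x n - xtil‖ ^ 2 with ha
  have ha0 : ∀ n, 0 ≤ a n := fun n => by positivity
  -- key estimate
  have key : ∀ m n, m ≤ n → a n ≤ a m + ∑ k ∈ Finset.Ico m n, b k := by
    intro m n hmn
    induction n with
    | zero =>
      interval_cases m
      simp
    | succ n ih =>
      rcases Nat.lt_or_ge m (n + 1) with h | h
      · have hmn' : m ≤ n := Nat.lt_succ_iff.mp h
        have := ih hmn'
        calc a (n + 1) ≤ a n + b n := hfejer n
          _ ≤ a m + ∑ k ∈ Finset.Ico m n, b k + b n := by linarith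
          _ = a m + ∑ k ∈ Finset.Ico m (n + 1), b k := by
              rw [Finset.sum_Ico_succ_top hmn']; ring
      · have : m = n + 1 := le_antisymm hmn h
        subst this; simp
  -- tail sums
  have tail_bound : ∀ m n, m ≤ n →
      ∑ k ∈ Finset.Ico m n, b k ≤ ∑' k, b (k + m) := by
    intro m n hmn
    rw [Finset.sum_Ico_eq_sum_range]
    have hsumm : Summable fun k => b (k + m) := (summable_nat_add_iff m).2 hbsum
    calc ∑ i ∈ Finset.range (n - m), b (m + i)
        = ∑ i ∈ Finset.range (n - m), b (i + m) := by
          simp [add_comm]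
      _ ≤ ∑' k, b (k + m) := Summable.sum_le_tsum _ (fun i _ => hb0 _) hsumm
  have tail_tendsto : Filter.Tendsto (fun m => ∑' k, b (k + m))
      Filter.atTop (nhds 0) := tendsto_sum_nat_add b
  -- subsequence squared tendsto
  have hsub2 : Filter.Tendsto (fun i => a (φ i)) Filter.atTop (nhds 0) := by
    have h1 : Filter.Tendsto (fun i => ‖x (φ i) - xtil‖) Filter.atTop (nhds 0) :=
      (tendsto_iff_norm_sub_tendsto_zero.mp hsub)
    have := (h1.pow 2)
    simpa using this
  -- a tends to 0
  have haten : Filter.Tendsto a Filter.atTop (nhds 0) := by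
    rw [Metric.tendsto_atTop]
    intro ε hε
    have hε2 : 0 < ε / 2 := by linarith
    obtain ⟨I, hI⟩ := (Metric.tendsto_atTop.mp hsub2) (ε / 2) hε2
    obtain ⟨M, hM⟩ := (Metric.tendsto_atTop.mp tail_tendsto) (ε / 2) hε2
    set i := max I M with hi
    have hφi : M ≤ φ i := le_trans (le_max_right I M) (le_trans (hφ.id_le i) (le_refl _))
    refine ⟨φ i, fun n hn => ?_⟩
    have h1 : a (φ i) < ε / 2 := by
      have := hI i (le_max_left I M)
      rwa [Real.dist_eq, sub_zero, abs_of_nonneg (ha0 _)] at this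
    have h2 : ∑' k, b (k + φ i) < ε / 2 := by
      have := hM (φ i) hφi
      rwa [Real.dist_eq, sub_zero, abs_of_nonneg (tsum_nonneg fun k => hb0 _)] at this
    have h3 := key (φ i) n hn
    have h4 := tail_bound (φ i) n hn
    rw [Real.dist_eq, sub_zero, abs_of_nonneg (ha0 n)]
    linarith
  -- conclude
  rw [tendsto_iff_norm_sub_tendsto_zero]
  have : Filter.Tendsto (fun n => Real.sqrt (a n)) Filter.atTop (nhds 0) := by
    simpa using haten.sqrt
  convert this using 2 with n
  rw [ha]
  exact (Real.sqrt_sq (norm_nonneg _)).symm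
end

section
/- One-step inequality with SAA errors: let f, f̂ : E → ℝ with f̂ convex, let x, y ∈ Ω, let g be a subgradient of f̂ at x, set q = max(1, ‖g‖), let ζ satisfy ζ̲ ≤ ζ ≤ ζ̄, let α ≥ 0, and let e be a real number with e ≥ |f̂(x) − f(x)| + |f̂(y) − f(y)|. Then ‖P(x − α·ζ·q⁻¹·g) − y‖² ≤ ‖x − y‖² − 2·α·(ζ/q)·(f(x) − f(y)) + 2·α·ζ̄·e + α²·ζ̄². -/
open scoped RealInnerProductSpace

/-- One-step inequality with SAA errors. -/
theorem stmt_7 {E : Type*} [NormedAddCommGroup E] [InnerProductSpace ℝ E]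
    (Ω : Set E) (hΩne : Ω.Nonempty) (hΩconv : Convex ℝ Ω)
    (P : E → E)
    (hPnonexp : ∀ u v : E, ‖P u - P v‖ ≤ ‖u - v‖)
    (hPmem : ∀ u : E, P u ∈ Ω)
    (hPfix : ∀ y ∈ Ω, P y = y)
    (ζlow ζbar : ℝ) (hζlow : 0 < ζlow) (hζord : ζlow ≤ ζbar)
    (f fhat : E → ℝ) (hfhat : ConvexOn ℝ Set.univ fhat)
    (x y : E) (hx : x ∈ Ω) (hy : y ∈ Ω)
    (g : E) (hg : ∀ z : E, fhat x + ⟪g, z - x⟫ ≤ fhat z)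
    (q : ℝ) (hq : q = max 1 ‖g‖)
    (ζ : ℝ) (hζ1 : ζlow ≤ ζ) (hζ2 : ζ ≤ ζbar)
    (α : ℝ) (hα : 0 ≤ α)
    (e : ℝ) (he : |fhat x - f x| + |fhat y - f y| ≤ e) :
    ‖P (x - (α * ζ * q⁻¹) • g) - y‖ ^ 2 ≤
      ‖x - y‖ ^ 2 - 2 * α * (ζ / q) * (f x - f y) + 2 * α * ζbar * e + α ^ 2 * ζbar ^ 2 := by

  have hζ0 : 0 < ζ := hζlow.trans_le hζ1
  have hq1 : 1 ≤ q := by rw [hq]; exact le_max_left _ _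
  have hq0 : 0 < q := lt_of_lt_of_le one_pos hq1
  have hgq : ‖g‖ ≤ q := by rw [hq]; exact le_max_right _ _
  set s : ℝ := α * ζ * q⁻¹ with hs
  have hs0 : 0 ≤ s := by positivity
  have he0 : 0 ≤ e := le_trans (add_nonneg (abs_nonneg _) (abs_nonneg _)) he
  have step1 : ‖P (x - s • g) - y‖ ≤ ‖x - s • g - y‖ := by
    have := hPnonexp (x - s • g) y
    rwa [hPfix y hy] at this
  have step1sq : ‖P (x - s • g) - y‖ ^ 2 ≤ ‖x - s • g - y‖ ^ 2 :=
    pow_le_pow_left₀ (norm_nonneg _) step1 2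
  have expand : ‖x - s • g - y‖ ^ 2
      = ‖x - y‖ ^ 2 - 2 * s * ⟪g, x - y⟫ + s ^ 2 * ‖g‖ ^ 2 := by
    have h1 : x - s • g - y = (x - y) - s • g := by abel
    rw [h1, norm_sub_sq_real, real_inner_smul_right, real_inner_comm, norm_smul,
      Real.norm_eq_abs, abs_of_nonneg hs0, mul_pow]
    ring
  have hsub : fhat x - fhat y ≤ ⟪g, x - y⟫ := by
    have h := hg y
    have h2 : ⟪g, y - x⟫ = -⟪g, x - y⟫ := by
      rw [inner_sub_right, inner_sub_right]; ring
    linarith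
  have hfe : f x - f y - e ≤ fhat x - fhat y := by
    have h1 := neg_abs_le (fhat x - f x)
    have h2 := le_abs_self (fhat y - f y)
    linarith
  have hinner : f x - f y - e ≤ ⟪g, x - y⟫ := le_trans hfe hsub
  -- s ≤ α * ζbar
  have hsle : s ≤ α * ζbar := by
    have h1 : q⁻¹ ≤ 1 := by
      rw [inv_le_one_iff₀]; right; exact hq1
    calc s = α * ζ * q⁻¹ := rfl
    _ ≤ α * ζbar * 1 := by
        apply mul_le_mul (mul_le_mul le_rfl hζ2 hζ0.le hα) h1 (by positivity) (mul_nonneg hα (hζlow.trans_le hζord).le)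
    _ = α * ζbar := by ring
  have hsg : s * ‖g‖ ≤ α * ζbar := by
    have h1 : s * ‖g‖ ≤ s * q := mul_le_mul_of_nonneg_left hgq hs0
    have h2 : s * q = α * ζ := by rw [hs]; field_simp
    nlinarith
  have hsgsq : s ^ 2 * ‖g‖ ^ 2 ≤ α ^ 2 * ζbar ^ 2 := by
    nlinarith [mul_nonneg hs0 (norm_nonneg g)]
  have hmid : 2 * α * (ζ / q) = 2 * s := by rw [hs]; ring
  have key : -(2 * s * ⟪g, x - y⟫) ≤ -(2 * s * (f x - f y)) + 2 * α * ζbar * e := by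
    have h1 : 2 * s * (f x - f y - e) ≤ 2 * s * ⟪g, x - y⟫ :=
      mul_le_mul_of_nonneg_left hinner (by positivity)
    nlinarith
  calc ‖P (x - s • g) - y‖ ^ 2 ≤ ‖x - s • g - y‖ ^ 2 := step1sq
  _ = ‖x - y‖ ^ 2 - 2 * s * ⟪g, x - y⟫ + s ^ 2 * ‖g‖ ^ 2 := expand
  _ ≤ ‖x - y‖ ^ 2 - 2 * α * (ζ / q) * (f x - f y) + 2 * α * ζbar * e + α ^ 2 * ζbar ^ 2 := by
      rw [hmid]; linarith
end

section
/- Boundedness of iterates under summable weighted SAA errors (Proposition 1): let f : E → ℝ and x* ∈ Ω with f(x*) ≤ f(y) for all y ∈ Ω. For each k ≥ 1 let f_k : E → ℝ be convex. Let (x_k)_{k≥1} be a sequence with x_1 ∈ Ω and, for every k ≥ 1, x_{k+1} = P(x_k − α_k·ζ_k·q_k⁻¹·g_k), where g_k is a subgradient of f_k at x_k, q_k = max(1, ‖g_k‖), 0 < ζ_k ≤ ζ̄, and 0 ≤ α_k ≤ C₂/k. Define ē_k = |f_k(x_k) − f(x_k)| + |f_k(x*) − f(x*)| and suppose ∑_{k=1}^∞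 ē_k/k ≤ C₄ < ∞. Then for every k ≥ 1, ‖x_k − x*‖² ≤ ‖x_1 − x*‖² + 2·C₂·ζ̄·C₄ + ζ̄²·C₂²·(π²/6); in particular, the sequence (x_k) is bounded. -/
/-!
With the normalised step `s = a / max 1 ‖g‖` one has `s ≤ a` and `s‖g‖ ≤ a`, so nonexpansiveness
of `P` and `P x* = x*` give
`‖x_{k+1} - x*‖² ≤ ‖x_k - x*‖² + 2a⟪g_k, x* - x_k⟫ + a²` with `a = α_k ζ_k ≤ C₂ ζ̄ / k`.
Because `x_k ∈ Ω` and `x*` minimises `f` over `Ω`, the subgradient inequality bounds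
`⟪g_k, x* - x_k⟫ ≤ f_k(x*) - f_k(x_k)` by the error `ē_k`. Telescoping, the increments sum to at
most `2 C₂ ζ̄ ∑ ē_k / k + (C₂ ζ̄)² ∑ 1 / k²`, which is bounded by hypothesis and by `ζ(2) = π²/6`.
-/

open scoped RealInnerProductSpace

lemma mul_inv_max_one_mul_le {a : ℝ} (ha : 0 ≤ a) (t : ℝ) : a * (max 1 t)⁻¹ * t ≤ a := by
  have hq : 0 < max 1 t := lt_of_lt_of_le one_pos (le_max_left _ _)
  rw [mul_assoc, ← div_eq_inv_mul]
  exact mul_le_of_le_one_right ha ((div_le_one hq).2 (le_max_right _ _))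

lemma mul_inv_max_one_le {a : ℝ} (ha : 0 ≤ a) (t : ℝ) : a * (max 1 t)⁻¹ ≤ a :=
  mul_le_of_le_one_right ha (inv_le_one_of_one_le₀ (le_max_left _ _))

lemma two_mul_mul_add_sq_le_of_le_div {a c e k : ℝ} (ha : 0 ≤ a) (hac : a ≤ c / k)
    (he : 0 ≤ e) : 2 * a * e + a ^ 2 ≤ 2 * c * (e / k) + c ^ 2 * (1 / k ^ 2) := by
  have h₁ : a * e ≤ c * (e / k) :=
    calc a * e ≤ c / k * e := mul_le_mul_of_nonneg_right hac he
      _ = c * (e / k) := by ring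
  have h₂ : a ^ 2 ≤ c ^ 2 * (1 / k ^ 2) :=
    calc a ^ 2 ≤ (c / k) ^ 2 := pow_le_pow_left₀ ha hac 2
      _ = c ^ 2 * (1 / k ^ 2) := by ring
  linarith

lemma norm_le_sqrt_add_norm_of_norm_sub_sq_le {E : Type*} [SeminormedAddCommGroup E]
    {x y : E} {B : ℝ} (h : ‖x - y‖ ^ 2 ≤ B) : ‖x‖ ≤ √B + ‖y‖ := by
  have hxy : ‖x - y‖ ≤ √B := by simpa only [abs_norm] using Real.abs_le_sqrt h
  linarith [norm_sub_norm_le x y]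

lemma le_add_sum_Icc_of_succ_le_add {d u : ℕ → ℝ} (h : ∀ k, 1 ≤ k → d (k + 1) ≤ d k + u k)
    (K : ℕ) : d (K + 1) ≤ d 1 + ∑ k ∈ Finset.Icc 1 K, u k := by
  induction K with
  | zero => simp
  | succ K ih =>
    rw [Finset.sum_Icc_succ_top (Nat.le_add_left 1 K)]
    linarith [h (K + 1) (Nat.le_add_left 1 K)]

lemma sum_Icc_one_div_sq_le_pi_sq_div_six (K : ℕ) :
    ∑ k ∈ Finset.Icc 1 K, (1 : ℝ) / (k : ℝ) ^ 2 ≤ Real.pi ^ 2 / 6 :=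
  sum_le_hasSum _ (fun _ _ => by positivity) hasSum_zeta_two

section ProjectedSubgradient

variable {E : Type*} [NormedAddCommGroup E] [InnerProductSpace ℝ E]

lemma norm_sub_smul_sub_sq (x y g : E) (s : ℝ) :
    ‖x - s • g - y‖ ^ 2 = ‖x - y‖ ^ 2 + 2 * s * ⟪g, y - x⟫ + s ^ 2 * ‖g‖ ^ 2 := by
  rw [sub_right_comm, norm_sub_sq_real, real_inner_smul_right, real_inner_comm, norm_smul,
    Real.norm_eq_abs, mul_pow, sq_abs, ← neg_sub x y, inner_neg_right]
  ring

lemma norm_projectedStep_sub_sq_le {P : E → E} (hP : ∀ u v : E, ‖P u - P v‖ ≤ ‖u - v‖)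
    {y : E} (hy : P y = y) (x g : E) {a e : ℝ} (ha : 0 ≤ a) (he : ⟪g, y - x⟫ ≤ e)
    (he₀ : 0 ≤ e) :
    ‖P (x - (a * (max 1 ‖g‖)⁻¹) • g) - y‖ ^ 2 ≤ ‖x - y‖ ^ 2 + 2 * a * e + a ^ 2 := by
  set s := a * (max 1 ‖g‖)⁻¹
  have hs₀ : 0 ≤ s := mul_nonneg ha (inv_nonneg.2 (le_trans zero_le_one (le_max_left _ _)))
  have hnorm : ‖P (x - s • g) - y‖ ≤ ‖x - s • g - y‖ := by
    simpa only [hy] using hP (x - s • g) y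
  have hinner : s * ⟪g, y - x⟫ ≤ a * e :=
    (mul_le_mul_of_nonneg_left he hs₀).trans
      (mul_le_mul_of_nonneg_right (mul_inv_max_one_le ha _) he₀)
  have hsg : (s * ‖g‖) ^ 2 ≤ a ^ 2 :=
    pow_le_pow_left₀ (mul_nonneg hs₀ (norm_nonneg g)) (mul_inv_max_one_mul_le ha _) 2
  calc ‖P (x - s • g) - y‖ ^ 2 ≤ ‖x - s • g - y‖ ^ 2 :=
        pow_le_pow_left₀ (norm_nonneg _) hnorm 2
    _ = ‖x - y‖ ^ 2 + 2 * (s * ⟪g, y - x⟫) + (s * ‖g‖) ^ 2 := by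
        rw [norm_sub_smul_sub_sq]; ring
    _ ≤ ‖x - y‖ ^ 2 + 2 * a * e + a ^ 2 := by linarith

lemma inner_sub_le_abs_add_abs_of_subgradient {φ f : E → ℝ} {x y g : E}
    (hg : φ x + ⟪g, y - x⟫ ≤ φ y) (hf : f y ≤ f x) :
    ⟪g, y - x⟫ ≤ |φ x - f x| + |φ y - f y| := by
  linarith [neg_abs_le (φ x - f x), le_abs_self (φ y - f y)]

end ProjectedSubgradient

theorem stmt_8_general {E : Type*} [NormedAddCommGroup E] [InnerProductSpace ℝ E]
    (Ω : Set E)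
    (P : E → E)
    (hPnonexp : ∀ u v : E, ‖P u - P v‖ ≤ ‖u - v‖)
    (hPmem : ∀ u : E, P u ∈ Ω)
    (hPfix : ∀ y ∈ Ω, P y = y)
    (C₂ C₄ ζbar : ℝ) (hC₂ : 0 < C₂) (hζbar : 0 < ζbar)
    (f : E → ℝ)
    (xstar : E) (hxstar : xstar ∈ Ω) (hopt : ∀ y ∈ Ω, f xstar ≤ f y)
    (fk : ℕ → E → ℝ)
    (x g : ℕ → E) (α ζ : ℕ → ℝ)
    (hx1 : x 1 ∈ Ω)
    (hg : ∀ k : ℕ, 1 ≤ k → ∀ y : E, fk k (x k) + ⟪g k, y - x k⟫ ≤ fk k y)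
    (hζ : ∀ k : ℕ, 1 ≤ k → 0 < ζ k ∧ ζ k ≤ ζbar)
    (hα : ∀ k : ℕ, 1 ≤ k → 0 ≤ α k ∧ α k ≤ C₂ / k)
    (hupd : ∀ k : ℕ, 1 ≤ k →
      x (k + 1) = P (x k - (α k * ζ k * (max 1 ‖g k‖)⁻¹) • g k))
    (ebar : ℕ → ℝ)
    (hebar : ∀ k : ℕ, 1 ≤ k →
      ebar k = |fk k (x k) - f (x k)| + |fk k xstar - f xstar|)
    (hsum : ∀ K : ℕ, ∑ k ∈ Finset.Icc 1 K, ebar k / k ≤ C₄) :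
    (∀ k : ℕ, 1 ≤ k →
      ‖x k - xstar‖ ^ 2 ≤
        ‖x 1 - xstar‖ ^ 2 + 2 * C₂ * ζbar * C₄ + ζbar ^ 2 * C₂ ^ 2 * (Real.pi ^ 2 / 6)) ∧
    ∃ M : ℝ, ∀ k : ℕ, 1 ≤ k → ‖x k‖ ≤ M := by
  have hmem : ∀ k, 1 ≤ k → x k ∈ Ω := by
    refine fun k hk => Nat.le_induction hx1 (fun n hn _ => ?_) k hk
    rw [hupd n hn]
    exact hPmem _
  have hstep : ∀ k, 1 ≤ k → ‖x (k + 1) - xstar‖ ^ 2 ≤ ‖x k - xstar‖ ^ 2 +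
      (2 * (C₂ * ζbar) * (ebar k / k) + (C₂ * ζbar) ^ 2 * (1 / (k : ℝ) ^ 2)) := by
    intro k hk
    obtain ⟨hζ₀, hζle⟩ := hζ k hk
    obtain ⟨hα₀, hαle⟩ := hα k hk
    have ha₀ : 0 ≤ α k * ζ k := mul_nonneg hα₀ hζ₀.le
    have ha : α k * ζ k ≤ C₂ * ζbar / k := by
      rw [mul_div_right_comm]
      exact mul_le_mul hαle hζle hζ₀.le (hα₀.trans hαle)
    have he : ⟪g k, xstar - x k⟫ ≤ ebar k := hebar k hk ▸
      inner_sub_le_abs_add_abs_of_subgradient (hg k hk xstar) (hopt _ (hmem k hk))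
    have he₀ : 0 ≤ ebar k := by rw [hebar k hk]; positivity
    rw [hupd k hk]
    exact (norm_projectedStep_sub_sq_le hPnonexp (hPfix _ hxstar) _ _ ha₀ he he₀).trans
      (by linarith [two_mul_mul_add_sq_le_of_le_div ha₀ ha he₀])
  have hbound : ∀ k, 1 ≤ k → ‖x k - xstar‖ ^ 2 ≤
      ‖x 1 - xstar‖ ^ 2 + 2 * C₂ * ζbar * C₄ + ζbar ^ 2 * C₂ ^ 2 * (Real.pi ^ 2 / 6) := by
    intro k hk
    obtain ⟨K, rfl⟩ : ∃ K, k = K + 1 := ⟨k - 1, by omega⟩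
    have htel := le_add_sum_Icc_of_succ_le_add (d := fun k => ‖x k - xstar‖ ^ 2) hstep K
    rw [Finset.sum_add_distrib, ← Finset.mul_sum, ← Finset.mul_sum] at htel
    have hc : 0 ≤ C₂ * ζbar := by positivity
    linarith [mul_le_mul_of_nonneg_left (hsum K) (mul_nonneg zero_le_two hc),
      mul_le_mul_of_nonneg_left (sum_Icc_one_div_sq_le_pi_sq_div_six K) (sq_nonneg (C₂ * ζbar))]
  exact ⟨hbound, _, fun k hk => norm_le_sqrt_add_norm_of_norm_sub_sq_le (hbound k hk)⟩

/-- Boundedness of iterates under summable weighted SAA errors (Proposition 1). -/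
theorem stmt_8 {E : Type*} [NormedAddCommGroup E] [InnerProductSpace ℝ E]
    (Ω : Set E) (hΩne : Ω.Nonempty) (hΩconv : Convex ℝ Ω)
    (P : E → E)
    (hPnonexp : ∀ u v : E, ‖P u - P v‖ ≤ ‖u - v‖)
    (hPmem : ∀ u : E, P u ∈ Ω)
    (hPfix : ∀ y ∈ Ω, P y = y)
    (C₂ C₄ ζbar : ℝ) (hC₂ : 0 < C₂) (hC₄ : 0 < C₄) (hζbar : 0 < ζbar)
    (f : E → ℝ)
    (xstar : E) (hxstar : xstar ∈ Ω) (hopt : ∀ y ∈ Ω, f xstar ≤ f y)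
    (fk : ℕ → E → ℝ) (hfk : ∀ k : ℕ, 1 ≤ k → ConvexOn ℝ Set.univ (fk k))
    (x g : ℕ → E) (α ζ : ℕ → ℝ)
    (hx1 : x 1 ∈ Ω)
    (hg : ∀ k : ℕ, 1 ≤ k → ∀ y : E, fk k (x k) + ⟪g k, y - x k⟫ ≤ fk k y)
    (hζ : ∀ k : ℕ, 1 ≤ k → 0 < ζ k ∧ ζ k ≤ ζbar)
    (hα : ∀ k : ℕ, 1 ≤ k → 0 ≤ α k ∧ α k ≤ C₂ / k)
    (hupd : ∀ k : ℕ, 1 ≤ k →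
      x (k + 1) = P (x k - (α k * ζ k * (max 1 ‖g k‖)⁻¹) • g k))
    (ebar : ℕ → ℝ)
    (hebar : ∀ k : ℕ, 1 ≤ k →
      ebar k = |fk k (x k) - f (x k)| + |fk k xstar - f xstar|)
    (hsum : ∀ K : ℕ, ∑ k ∈ Finset.Icc 1 K, ebar k / k ≤ C₄) :
    (∀ k : ℕ, 1 ≤ k →
      ‖x k - xstar‖ ^ 2 ≤
        ‖x 1 - xstar‖ ^ 2 + 2 * C₂ * ζbar * C₄ + ζbar ^ 2 * C₂ ^ 2 * (Real.pi ^ 2 / 6)) ∧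
    ∃ M : ℝ, ∀ k : ℕ, 1 ≤ k → ‖x k‖ ≤ M :=
  stmt_8_general Ω P hPnonexp hPmem hPfix C₂ C₄ ζbar hC₂ hζbar f xstar hxstar hopt fk x g α ζ hx1 hg
    hζ hα hupd ebar hebar hsum
end

section
/- Lower limit of function values under vanishing SAA errors (deterministic core of the first part of Theorem 2): let f : E → ℝ be bounded below on Ω with f* = inf_{y ∈ Ω} f(y). For each k ≥ 1 let f_k : E → ℝ be convex. Let (x_k)_{k≥1} be a sequence with x_1 ∈ Ω and, for every k ≥ 1, x_{k+1} = P(x_k − α_k·ζ_k·q_k⁻¹·g_k), where g_k is a subgradient of f_k at x_k with ‖g_k‖ ≤ L, q_k = max(1, ‖g_k‖), ζ̲ ≤ ζ_k ≤ ζ̄, and 1/k ≤ α_k ≤ C₂/k. Suppose the approximation errors vanish: lim_{k→∞} |f_k(x_k) − f(x_k)| = 0 and, for every y ∈ Ω, lim_{k→∞} |f_k(y) − f(y)| = 0. Then liminf_{k→∞} f(x_k) = f*. -/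
/-!
Every iterate lies in `Ω`, so `f (x k) ≥ f*` and the lower limit is at least `f*`. If it were
larger, some `y ∈ Ω` and `δ > 0` would give `f_k (x k) - f_k y ≥ δ` for all large `k`, since the
approximation errors vanish. The projected subgradient step then decreases `‖x k - y‖²` by at
least a fixed multiple of the step size `γ k = α k ζ k / max 1 ‖g k‖` as soon as `γ k` is small,
which forces `∑ γ k < ∞`; but `γ k ≥ ζ̲ / (max 1 L · k)`, and the harmonic series diverges.
-/

open scoped RealInnerProductSpace
open Filter Topology

theorem sq_norm_proj_subgradient_step_sub_le {E : Type*} [NormedAddCommGroup E]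
    [InnerProductSpace ℝ E] {P : E → E} (hP : ∀ u v, ‖P u - P v‖ ≤ ‖u - v‖) {y : E} (hy : P y = y)
    {φ : E → ℝ} {x g : E} (hg : φ x + ⟪g, y - x⟫ ≤ φ y) {t L : ℝ} (ht : 0 ≤ t)
    (hgL : ‖g‖ ≤ L) :
    ‖P (x - t • g) - y‖ ^ 2 ≤ ‖x - y‖ ^ 2 - 2 * t * (φ x - φ y) + t ^ 2 * L ^ 2 := by
  have hproj : ‖P (x - t • g) - y‖ ≤ ‖(x - y) - t • g‖ :=
    calc ‖P (x - t • g) - y‖ = ‖P (x - t • g) - P y‖ := by rw [hy]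
      _ ≤ ‖(x - t • g) - y‖ := hP _ _
      _ = ‖(x - y) - t • g‖ := by rw [sub_right_comm]
  have hexpand :
      ‖(x - y) - t • g‖ ^ 2 = ‖x - y‖ ^ 2 - 2 * t * ⟪g, x - y⟫ + t ^ 2 * ‖g‖ ^ 2 := by
    rw [norm_sub_sq_real, real_inner_smul_right, norm_smul, real_inner_comm, mul_pow,
      Real.norm_eq_abs, sq_abs]
    ring
  have hsub : φ x - φ y ≤ ⟪g, x - y⟫ := by
    rw [← neg_sub y x, inner_neg_right]
    linarith
  have hg2 : ‖g‖ ^ 2 ≤ L ^ 2 := pow_le_pow_left₀ (norm_nonneg _) hgL 2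
  calc ‖P (x - t • g) - y‖ ^ 2 ≤ ‖(x - y) - t • g‖ ^ 2 :=
        pow_le_pow_left₀ (norm_nonneg _) hproj 2
    _ ≤ ‖x - y‖ ^ 2 - 2 * t * (φ x - φ y) + t ^ 2 * L ^ 2 := by
      rw [hexpand]
      nlinarith [mul_le_mul_of_nonneg_left hsub ht, mul_le_mul_of_nonneg_left hg2 (sq_nonneg t)]

theorem summable_of_add_le {u γ : ℕ → ℝ} (hu : ∀ k, 0 ≤ u k) (hγ : ∀ k, 0 ≤ γ k)
    (h : ∀ k, u (k + 1) + γ k ≤ u k) : Summable γ := by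
  have htele : ∀ n, u n + ∑ i ∈ Finset.range n, γ i ≤ u 0 := by
    intro n
    induction n with
    | zero => simp
    | succ n ih => rw [Finset.sum_range_succ]; linarith [h n]
  exact summable_of_sum_range_le hγ fun n => by linarith [htele n, hu n]

theorem summable_of_eventually_add_le {u γ : ℕ → ℝ} (hu : ∀ k, 0 ≤ u k)
    (hγ : ∀ᶠ k in atTop, 0 ≤ γ k) (h : ∀ᶠ k in atTop, u (k + 1) + γ k ≤ u k) : Summable γ := by
  obtain ⟨K, hK⟩ := eventually_atTop.1 (hγ.and h)
  refine (summable_nat_add_iff K).1 (summable_of_add_le (u := fun k => u (k + K))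
    (fun k => hu _) (fun k => (hK _ (Nat.le_add_left K k)).1) fun k => ?_)
  simpa only [Nat.add_right_comm] using (hK (k + K) (Nat.le_add_left K k)).2

theorem not_summable_of_eventually_div_le {γ : ℕ → ℝ} {c : ℝ} (hc : 0 < c)
    (h : ∀ᶠ k in atTop, c / k ≤ γ k) : ¬ Summable γ := by
  intro hγ
  have hdiv : Summable fun k : ℕ => c * (1 / (k : ℝ)) :=
    hγ.of_norm_bounded_eventually_nat <| h.mono fun k hk => by
      rwa [mul_one_div, Real.norm_of_nonneg (by positivity)]
  exact Real.not_summable_one_div_natCast ((summable_mul_left_iff hc.ne').1 hdiv)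

theorem frequently_lt_of_sq_descent {u γ d : ℕ → ℝ} {L δ : ℝ} (hu : ∀ k, 0 ≤ u k)
    (hγ : ∀ᶠ k in atTop, 0 ≤ γ k) (hγ0 : Tendsto γ atTop (𝓝 0)) (hγsum : ¬ Summable γ)
    (hδ : 0 < δ)
    (hdesc : ∀ᶠ k in atTop, u (k + 1) ≤ u k - 2 * γ k * d k + γ k ^ 2 * L ^ 2) :
    ∃ᶠ k in atTop, d k < δ := by
  rw [Filter.Frequently]
  intro hgap
  have hsmall : ∀ᶠ k in atTop, γ k * L ^ 2 < δ := by
    have hγL : Tendsto (fun k => γ k * L ^ 2) atTop (𝓝 0) := by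
      simpa using hγ0.mul_const (L ^ 2)
    exact hγL.eventually_lt_const hδ
  refine hγsum ((summable_mul_left_iff hδ.ne').1 (summable_of_eventually_add_le hu
    (hγ.mono fun k hk => mul_nonneg hδ.le hk) ?_))
  filter_upwards [hγ, hsmall, hgap, hdesc] with k hγk hsk hdk hk
  rw [not_lt] at hdk
  nlinarith [mul_le_mul_of_nonneg_left hdk hγk, mul_le_mul_of_nonneg_left hsk.le hγk]

theorem liminf_eq_of_frequently_lt {α : Type*} {l : Filter α} {u : α → ℝ} {b : ℝ}
    (hle : ∀ᶠ k in l, b ≤ u k) (hlt : ∀ a, b < a → ∃ᶠ k in l, u k < a) :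
    liminf u l = b := by
  suffices {a | ∀ᶠ k in l, a ≤ u k} = Set.Iic b by rw [liminf_eq, this, csSup_Iic]
  ext a
  refine ⟨fun ha => Set.mem_Iic.2 <| not_lt.1 fun hba => ?_,
    fun hab => hle.mono fun k hk => le_trans hab hk⟩
  obtain ⟨k, hk, hak⟩ := ((hlt a hba).and_eventually ha).exists
  exact not_le.2 hk hak

theorem div_le_mul_mul_inv_max {t a z zl n L : ℝ} (ht : 0 ≤ t) (ha : t ≤ a) (hzl : 0 ≤ zl)
    (hz : zl ≤ z) (hn : n ≤ L) : t * zl * (max 1 L)⁻¹ ≤ a * z * (max 1 n)⁻¹ := by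
  have ha0 : 0 ≤ a := ht.trans ha
  have hpos : (0 : ℝ) < max 1 n := lt_of_lt_of_le one_pos (le_max_left _ _)
  exact mul_le_mul (mul_le_mul ha hz hzl ha0) (inv_anti₀ hpos (max_le_max le_rfl hn))
    (inv_nonneg.2 (hpos.le.trans (max_le_max le_rfl hn))) (mul_nonneg ha0 (hzl.trans hz))

theorem mul_mul_inv_max_nonneg {a z n : ℝ} (ha : 0 ≤ a) (hz : 0 ≤ z) :
    0 ≤ a * z * (max 1 n)⁻¹ :=
  mul_nonneg (mul_nonneg ha hz) (inv_nonneg.2 (zero_le_one.trans (le_max_left _ _)))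

theorem mul_mul_inv_max_le_mul {a z n : ℝ} (ha : 0 ≤ a) (hz : 0 ≤ z) :
    a * z * (max 1 n)⁻¹ ≤ a * z :=
  mul_le_of_le_one_right (mul_nonneg ha hz) (inv_le_one_of_one_le₀ (le_max_left _ _))

section StepSize

variable {α ζ n : ℕ → ℝ} {C ζlow ζbar L : ℝ}

theorem eventually_div_le_mul_mul_inv_max (hζlow : 0 ≤ ζlow)
    (hα : ∀ k : ℕ, 1 ≤ k → 1 / (k : ℝ) ≤ α k)
    (hζ : ∀ k, 1 ≤ k → ζlow ≤ ζ k) (hn : ∀ k, 1 ≤ k → n k ≤ L) :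
    ∀ᶠ k in atTop, ζlow * (max 1 L)⁻¹ / k ≤ α k * ζ k * (max 1 (n k))⁻¹ :=
  eventually_atTop.2 ⟨1, fun k hk => by
    simpa only [one_div_mul_eq_div, mul_div_right_comm] using
      div_le_mul_mul_inv_max (by positivity) (hα k hk) hζlow (hζ k hk) (hn k hk)⟩

theorem tendsto_mul_mul_inv_max_zero (hα : ∀ k : ℕ, 1 ≤ k → 0 ≤ α k ∧ α k ≤ C / k)
    (hζ : ∀ k, 1 ≤ k → 0 ≤ ζ k ∧ ζ k ≤ ζbar) :
    Tendsto (fun k => α k * ζ k * (max 1 (n k))⁻¹) atTop (𝓝 0) := by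
  have hupper : ∀ᶠ k in atTop, α k * ζ k * (max 1 (n k))⁻¹ ≤ C / k * ζbar :=
    eventually_atTop.2 ⟨1, fun k hk => (mul_mul_inv_max_le_mul (hα k hk).1 (hζ k hk).1).trans
      (mul_le_mul (hα k hk).2 (hζ k hk).2 (hζ k hk).1 ((hα k hk).1.trans (hα k hk).2))⟩
  have hnonneg : ∀ᶠ k in atTop, 0 ≤ α k * ζ k * (max 1 (n k))⁻¹ :=
    eventually_atTop.2 ⟨1, fun k hk => mul_mul_inv_max_nonneg (hα k hk).1 (hζ k hk).1⟩
  refine tendsto_of_tendsto_of_tendsto_of_le_of_le' tendsto_const_nhds ?_ hnonneg hupper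
  simpa using (tendsto_const_div_atTop_nhds_zero_nat C).mul_const ζbar

end StepSize

theorem stmt_9_general {E : Type*} [NormedAddCommGroup E] [InnerProductSpace ℝ E]
    (Ω : Set E)
    (P : E → E)
    (hPnonexp : ∀ u v : E, ‖P u - P v‖ ≤ ‖u - v‖)
    (hPmem : ∀ u : E, P u ∈ Ω)
    (hPfix : ∀ y ∈ Ω, P y = y)
    (C₂ ζlow ζbar L : ℝ) (hζlow : 0 < ζlow)
    (f : E → ℝ) (fstar : ℝ) (hfstar : IsGLB (f '' Ω) fstar)
    (fk : ℕ → E → ℝ)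
    (x g : ℕ → E) (α ζ : ℕ → ℝ)
    (hx1 : x 1 ∈ Ω)
    (hg : ∀ k : ℕ, 1 ≤ k → ∀ y : E, fk k (x k) + ⟪g k, y - x k⟫ ≤ fk k y)
    (hgL : ∀ k : ℕ, 1 ≤ k → ‖g k‖ ≤ L)
    (hζ : ∀ k : ℕ, 1 ≤ k → ζlow ≤ ζ k ∧ ζ k ≤ ζbar)
    (hα : ∀ k : ℕ, 1 ≤ k → 1 / (k : ℝ) ≤ α k ∧ α k ≤ C₂ / k)
    (hupd : ∀ k : ℕ, 1 ≤ k →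
      x (k + 1) = P (x k - (α k * ζ k * (max 1 ‖g k‖)⁻¹) • g k))
    (herr1 : Filter.Tendsto (fun k => |fk k (x k) - f (x k)|) Filter.atTop (nhds 0))
    (herr2 : ∀ y ∈ Ω,
      Filter.Tendsto (fun k => |fk k y - f y|) Filter.atTop (nhds 0)) :
    Filter.liminf (fun k => f (x k)) Filter.atTop = fstar := by
  set γ : ℕ → ℝ := fun k => α k * ζ k * (max 1 ‖g k‖)⁻¹
  have hxΩ : ∀ k, 1 ≤ k → x k ∈ Ω := by
    intro k hk
    induction k, hk using Nat.le_induction with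
    | base => exact hx1
    | succ k hk _ => rw [hupd k hk]; exact hPmem _
  have hαζ : ∀ k : ℕ, 1 ≤ k → (0 ≤ α k ∧ α k ≤ C₂ / k) ∧ (0 ≤ ζ k ∧ ζ k ≤ ζbar) := fun k hk =>
    ⟨⟨le_trans (by positivity) (hα k hk).1, (hα k hk).2⟩,
      ⟨hζlow.le.trans (hζ k hk).1, (hζ k hk).2⟩⟩
  have hγnonneg : ∀ k, 1 ≤ k → 0 ≤ γ k := fun k hk =>
    mul_mul_inv_max_nonneg (hαζ k hk).1.1 (hαζ k hk).2.1
  have hγ0 : Tendsto γ atTop (𝓝 0) :=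
    tendsto_mul_mul_inv_max_zero (fun k hk => (hαζ k hk).1) fun k hk => (hαζ k hk).2
  have hγsum : ¬ Summable γ := not_summable_of_eventually_div_le (by positivity)
    (eventually_div_le_mul_mul_inv_max hζlow.le (fun k hk => (hα k hk).1)
      (fun k hk => (hζ k hk).1) hgL)
  refine liminf_eq_of_frequently_lt
    (eventually_atTop.2 ⟨1, fun k hk => hfstar.1 ⟨x k, hxΩ k hk, rfl⟩⟩) fun a ha => ?_
  obtain ⟨_, ⟨y, hy, rfl⟩, -, hya⟩ := hfstar.exists_between ha
  have hdesc : ∀ᶠ k in atTop, ‖x (k + 1) - y‖ ^ 2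
      ≤ ‖x k - y‖ ^ 2 - 2 * γ k * (fk k (x k) - fk k y) + γ k ^ 2 * L ^ 2 :=
    eventually_atTop.2 ⟨1, fun k hk => by
      rw [hupd k hk]
      exact sq_norm_proj_subgradient_step_sub_le hPnonexp (hPfix y hy) (hg k hk y)
        (hγnonneg k hk) (hgL k hk)⟩
  have hδ : 0 < (a - f y) / 2 := half_pos (sub_pos.2 hya)
  have hgap := frequently_lt_of_sq_descent (fun k => sq_nonneg ‖x k - y‖)
    (eventually_atTop.2 ⟨1, hγnonneg⟩) hγ0 hγsum hδ hdesc
  have herr := (herr1.eventually_lt_const (half_pos hδ)).and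
    ((herr2 y hy).eventually_lt_const (half_pos hδ))
  refine (hgap.and_eventually herr).mono fun k ⟨hk, hk₁, hk₂⟩ => ?_
  rw [abs_lt] at hk₁ hk₂
  -- with `δ = (a - f y) / 2`: `f (x k) < f_k (x k) + δ/2 < f_k y + 3δ/2 < f y + 2δ = a`
  linarith [hk₁.1, hk₂.2]

/-- Lower limit of function values under vanishing SAA errors. -/
theorem stmt_9 {E : Type*} [NormedAddCommGroup E] [InnerProductSpace ℝ E]
    (Ω : Set E) (hΩne : Ω.Nonempty) (hΩconv : Convex ℝ Ω)
    (P : E → E)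
    (hPnonexp : ∀ u v : E, ‖P u - P v‖ ≤ ‖u - v‖)
    (hPmem : ∀ u : E, P u ∈ Ω)
    (hPfix : ∀ y ∈ Ω, P y = y)
    (C₂ ζlow ζbar L : ℝ) (hC₂ : 0 < C₂) (hζlow : 0 < ζlow) (hζord : ζlow ≤ ζbar)
    (hL : 0 < L)
    (f : E → ℝ) (fstar : ℝ) (hfstar : IsGLB (f '' Ω) fstar)
    (fk : ℕ → E → ℝ) (hfk : ∀ k : ℕ, 1 ≤ k → ConvexOn ℝ Set.univ (fk k))
    (x g : ℕ → E) (α ζ : ℕ → ℝ)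
    (hx1 : x 1 ∈ Ω)
    (hg : ∀ k : ℕ, 1 ≤ k → ∀ y : E, fk k (x k) + ⟪g k, y - x k⟫ ≤ fk k y)
    (hgL : ∀ k : ℕ, 1 ≤ k → ‖g k‖ ≤ L)
    (hζ : ∀ k : ℕ, 1 ≤ k → ζlow ≤ ζ k ∧ ζ k ≤ ζbar)
    (hα : ∀ k : ℕ, 1 ≤ k → 1 / (k : ℝ) ≤ α k ∧ α k ≤ C₂ / k)
    (hupd : ∀ k : ℕ, 1 ≤ k →
      x (k + 1) = P (x k - (α k * ζ k * (max 1 ‖g k‖)⁻¹) • g k))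
    (herr1 : Filter.Tendsto (fun k => |fk k (x k) - f (x k)|) Filter.atTop (nhds 0))
    (herr2 : ∀ y ∈ Ω,
      Filter.Tendsto (fun k => |fk k y - f y|) Filter.atTop (nhds 0)) :
    Filter.liminf (fun k => f (x k)) Filter.atTop = fstar :=
  stmt_9_general Ω P hPnonexp hPmem hPfix C₂ ζlow ζbar L hζlow f fstar hfstar fk x g α ζ hx1 hg hgL
    hζ hα hupd herr1 herr2
end

section
/- Convergence of iterates under vanishing and summable SAA errors (deterministic core of Theorem 2): let E = ℝⁿ (n-dimensional Euclidean space), let f : E → ℝ be convex, and suppose the set X* of minimizers of f over Ω is nonempty. For each k ≥ 1 let f_k : E → ℝ be convex. Let (x_k)_{k≥1} be a sequence with x_1 ∈ Ω and, for every k ≥ 1, x_{k+1} = P(x_k − α_k·ζ_k·q_k⁻¹·g_k), where g_k is a subgradient of f_k at x_k with ‖g_k‖ ≤ L, q_k = max(1, ‖g_k‖), ζ̲ ≤ ζ_k ≤ ζ̄, and 1/k ≤ α_k ≤ C₂/k. Suppose: lim_{k→∞} |f_k(x_k) − f(x_k)| = 0; for every y ∈ Ω, lim_{k→∞} |f_k(y)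 − f(y)| = 0; and for every x* ∈ X*, ∑_{k=1}^∞ α_k·(|f_k(x_k) − f(x_k)| + |f_k(x*) − f(x*)|) < ∞. Then there exists x̃ ∈ X* such that lim_{k→∞} x_k = x̃. -/
open Filter
set_option maxHeartbeats 1000000
open scoped RealInnerProductSpace

lemma aux_quasi_conv (a b : ℕ → ℝ) (ha : ∀ k, 0 ≤ a k) (hb : ∀ k, 0 ≤ b k)
    (hrec : ∀ k, a (k+1) ≤ a k + b k) (hs : Summable b) :
    ∃ l, Tendsto a atTop (nhds l) := by
  have hTs : ∀ k : ℕ, Summable (fun j => b (j + k)) := fun k => (summable_nat_add_iff k).2 hs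
  set T : ℕ → ℝ := fun k => ∑' j, b (j + k) with hT
  have hTrec : ∀ k, T k = b k + T (k+1) := by
    intro k
    have h0 := Summable.tsum_eq_zero_add (hTs k)
    simp only [hT, Nat.zero_add] at h0 ⊢
    rw [h0]
    congr 1
    apply tsum_congr
    intro j
    congr 1
    omega
  have hTnn : ∀ k, 0 ≤ T k := fun k => tsum_nonneg (fun j => hb _)
  set c : ℕ → ℝ := fun k => a k + T k with hc
  have hanti : Antitone c := by
    apply antitone_nat_of_succ_le
    intro k
    have := hrec k
    have := hTrec k
    simp only [hc]
    linarith
  have hbdd : BddBelow (Set.range c) := by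
    refine ⟨0, ?_⟩
    rintro _ ⟨k, rfl⟩
    have := ha k; have := hTnn k
    simp only [hc]; linarith
  have hct : Tendsto c atTop (nhds (⨅ k, c k)) := tendsto_atTop_ciInf hanti hbdd
  have hTt : Tendsto T atTop (nhds 0) := tendsto_sum_nat_add b
  refine ⟨(⨅ k, c k) - 0, ?_⟩
  have := hct.sub hTt
  refine this.congr (fun k => ?_)
  simp only [hc]; ring

lemma aux_freq (c : ℝ) (hc : 0 < c) (γ d : ℕ → ℝ)
    (hlow : ∀ k : ℕ, c / ((k : ℝ) + 1) ≤ γ k) (hsum : Summable fun k => γ k * d k) :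
    ∀ ε > 0, ∃ᶠ k in atTop, d k < ε := by
  intro ε hε
  by_contra h
  rw [Filter.not_frequently] at h
  obtain ⟨N, hN⟩ := Filter.eventually_atTop.1 h
  have h1 : Summable fun j : ℕ => γ (j + N) * d (j + N) := (summable_nat_add_iff N).2 hsum
  have h2 : Summable fun j : ℕ => c * ε / ((j : ℝ) + N + 1) := by
    apply h1.of_nonneg_of_le
    · intro j; positivity
    · intro j
      have hdj : ε ≤ d (j + N) := not_lt.1 (hN (j + N) (by omega))
      have hγj : c / ((j : ℝ) + N + 1) ≤ γ (j + N) := by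
        have := hlow (j + N); push_cast at this; linarith
      have hγnn : 0 ≤ γ (j + N) := le_trans (by positivity) hγj
      calc c * ε / ((j : ℝ) + N + 1) = (c / ((j : ℝ) + N + 1)) * ε := by ring
        _ ≤ γ (j + N) * d (j + N) := mul_le_mul hγj hdj hε.le hγnn
  have h3 : Summable fun j : ℕ => (1 : ℝ) / ((j : ℝ) + N + 1) := by
    have h4 := h2.mul_left ((c * ε)⁻¹)
    refine h4.congr (fun j => ?_)
    field_simp
  apply Real.not_summable_one_div_natCast
  rw [← summable_nat_add_iff (N + 1)]
  refine h3.congr (fun j => ?_)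
  push_cast
  ring_nf

lemma aux_key {n : ℕ} (xk xk1 xs gk : EuclideanSpace ℝ (Fin n))
    (fkx fks fx fs t C : ℝ)
    (ht : 0 < t)
    (h1 : ‖xk1 - xs‖ ≤ ‖(xk - t • gk) - xs‖)
    (h3 : fkx + ⟪gk, xs - xk⟫ ≤ fks)
    (htg : t * ‖gk‖ ≤ C) (hte : t ≤ C) :
    ‖xk1 - xs‖^2 + 2 * t * (fx - fs) ≤
      ‖xk - xs‖^2 + (2 * C * (|fkx - fx| + |fks - fs|) + C^2) := by
  have h2 : ‖(xk - t • gk) - xs‖^2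
      = ‖xk - xs‖^2 - 2 * t * ⟪gk, xk - xs⟫ + t^2 * ‖gk‖^2 := by
    have hre : xk - t • gk - xs = (xk - xs) - t • gk := by abel
    rw [hre, norm_sub_sq_real, real_inner_smul_right, norm_smul, Real.norm_eq_abs,
      abs_of_pos ht, real_inner_comm]
    ring
  have e1 : ⟪gk, xs - xk⟫ = ⟪gk, xs⟫ - ⟪gk, xk⟫ := inner_sub_right _ _ _
  have e2 : ⟪gk, xk - xs⟫ = ⟪gk, xk⟫ - ⟪gk, xs⟫ := inner_sub_right _ _ _
  have hlow : fx - fs - (|fkx - fx| + |fks - fs|) ≤ ⟪gk, xk - xs⟫ := by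
    have a1 := neg_abs_le (fkx - fx)
    have a2 := le_abs_self (fks - fs)
    rw [e2]; rw [e1] at h3; linarith
  have hsq : ‖xk1 - xs‖^2 ≤ ‖(xk - t • gk) - xs‖^2 :=
    pow_le_pow_left₀ (norm_nonneg _) h1 2
  have hprod : t * (fx - fs - (|fkx - fx| + |fks - fs|)) ≤ t * ⟪gk, xk - xs⟫ :=
    mul_le_mul_of_nonneg_left hlow ht.le
  have hgnn : 0 ≤ t * ‖gk‖ := mul_nonneg ht.le (norm_nonneg _)
  have h6 : t^2 * ‖gk‖^2 ≤ C^2 := by nlinarith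
  have henn : 0 ≤ |fkx - fx| + |fks - fs| := by positivity
  have h7 : t * (|fkx - fx| + |fks - fs|) ≤ C * (|fkx - fx| + |fks - fs|) :=
    mul_le_mul_of_nonneg_right hte henn
  nlinarith [hsq, h2]

/-- Convergence of iterates under vanishing and summable SAA errors. -/
theorem stmt_10 {n : ℕ}
    (Ω : Set (EuclideanSpace ℝ (Fin n))) (hΩne : Ω.Nonempty)
    (hΩclosed : IsClosed Ω) (hΩconv : Convex ℝ Ω)
    (P : EuclideanSpace ℝ (Fin n) → EuclideanSpace ℝ (Fin n))
    (hPnonexp : ∀ u v, ‖P u - P v‖ ≤ ‖u - v‖)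
    (hPmem : ∀ u, P u ∈ Ω)
    (hPfix : ∀ y ∈ Ω, P y = y)
    (C₂ ζlow ζbar L : ℝ) (hC₂ : 0 < C₂) (hζlow : 0 < ζlow) (hζord : ζlow ≤ ζbar)
    (hL : 0 < L)
    (f : EuclideanSpace ℝ (Fin n) → ℝ) (hf : ConvexOn ℝ Set.univ f)
    (Xstar : Set (EuclideanSpace ℝ (Fin n)))
    (hXstar : Xstar = {xs | xs ∈ Ω ∧ ∀ y ∈ Ω, f xs ≤ f y})
    (hXne : Xstar.Nonempty)
    (fk : ℕ → EuclideanSpace ℝ (Fin n) → ℝ)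
    (hfk : ∀ k : ℕ, 1 ≤ k → ConvexOn ℝ Set.univ (fk k))
    (x g : ℕ → EuclideanSpace ℝ (Fin n)) (α ζ : ℕ → ℝ)
    (hx1 : x 1 ∈ Ω)
    (hg : ∀ k : ℕ, 1 ≤ k → ∀ y, fk k (x k) + ⟪g k, y - x k⟫ ≤ fk k y)
    (hgL : ∀ k : ℕ, 1 ≤ k → ‖g k‖ ≤ L)
    (hζ : ∀ k : ℕ, 1 ≤ k → ζlow ≤ ζ k ∧ ζ k ≤ ζbar)
    (hα : ∀ k : ℕ, 1 ≤ k → 1 / (k : ℝ) ≤ α k ∧ α k ≤ C₂ / k)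
    (hupd : ∀ k : ℕ, 1 ≤ k →
      x (k + 1) = P (x k - (α k * ζ k * (max 1 ‖g k‖)⁻¹) • g k))
    (herr1 : Filter.Tendsto (fun k => |fk k (x k) - f (x k)|) Filter.atTop (nhds 0))
    (herr2 : ∀ y ∈ Ω,
      Filter.Tendsto (fun k => |fk k y - f y|) Filter.atTop (nhds 0))
    (herr3 : ∀ xs ∈ Xstar,
      Summable (fun k => α k * (|fk k (x k) - f (x k)| + |fk k xs - f xs|))) :
    ∃ xtil ∈ Xstar, Filter.Tendsto x Filter.atTop (nhds xtil) := by
  classical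
  obtain ⟨xs0, hxs0⟩ := hXne
  have hXmem : ∀ xs ∈ Xstar, xs ∈ Ω ∧ ∀ y ∈ Ω, f xs ≤ f y := by
    intro xs hxs; rw [hXstar] at hxs; exact hxs
  -- step sizes
  set γ : ℕ → ℝ := fun k => α k * ζ k * (max 1 ‖g k‖)⁻¹ with hγdef
  have hmaxpos : ∀ k, (0:ℝ) < max 1 ‖g k‖ := fun k => lt_of_lt_of_le one_pos (le_max_left _ _)
  have hζbar : 0 < ζbar := lt_of_lt_of_le hζlow hζord
  have hαpos : ∀ k : ℕ, 1 ≤ k → 0 < α k := by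
    intro k hk
    have hk' : (0:ℝ) < k := by exact_mod_cast hk
    have := (hα k hk).1
    calc (0:ℝ) < 1 / k := by positivity
      _ ≤ α k := this
  have hζpos : ∀ k : ℕ, 1 ≤ k → 0 < ζ k := fun k hk => lt_of_lt_of_le hζlow (hζ k hk).1
  have hγpos : ∀ k : ℕ, 1 ≤ k → 0 < γ k := by
    intro k hk
    exact mul_pos (mul_pos (hαpos k hk) (hζpos k hk)) (inv_pos.2 (hmaxpos k))
  have hkcast : ∀ k : ℕ, 1 ≤ k → (1:ℝ) ≤ (k:ℝ) := fun k hk => by exact_mod_cast hk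
  -- upper bounds on γ
  have hγub : ∀ k : ℕ, 1 ≤ k → γ k ≤ C₂ * ζbar / k := by
    intro k hk
    have hk1 := hkcast k hk
    have hkpos : (0:ℝ) < k := by linarith
    have hinv : (max 1 ‖g k‖)⁻¹ ≤ 1 := by
      rw [inv_le_one_iff₀]; right; exact le_max_left _ _
    have h1 : γ k ≤ α k * ζ k := by
      have := mul_le_mul_of_nonneg_left hinv (le_of_lt (mul_pos (hαpos k hk) (hζpos k hk)))
      simpa [hγdef, mul_assoc] using this
    have h2 : α k * ζ k ≤ (C₂ / k) * ζbar := by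
      apply mul_le_mul (hα k hk).2 (hζ k hk).2 (hζpos k hk).le (by positivity)
    calc γ k ≤ α k * ζ k := h1
      _ ≤ (C₂ / k) * ζbar := h2
      _ = C₂ * ζbar / k := by ring
  have hγg : ∀ k : ℕ, 1 ≤ k → γ k * ‖g k‖ ≤ C₂ * ζbar / k := by
    intro k hk
    have hk1 := hkcast k hk
    have hkpos : (0:ℝ) < k := by linarith
    have hinv : (max 1 ‖g k‖)⁻¹ * ‖g k‖ ≤ 1 := by
      rw [inv_mul_le_iff₀ (hmaxpos k), mul_one]
      exact le_max_right _ _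
    have h1 : γ k * ‖g k‖ ≤ α k * ζ k := by
      have := mul_le_mul_of_nonneg_left hinv (le_of_lt (mul_pos (hαpos k hk) (hζpos k hk)))
      calc γ k * ‖g k‖ = (α k * ζ k) * ((max 1 ‖g k‖)⁻¹ * ‖g k‖) := by
            simp only [hγdef]; ring
        _ ≤ (α k * ζ k) * 1 := this
        _ = α k * ζ k := by ring
    have h2 : α k * ζ k ≤ (C₂ / k) * ζbar :=
      mul_le_mul (hα k hk).2 (hζ k hk).2 (hζpos k hk).le (by positivity)
    calc γ k * ‖g k‖ ≤ α k * ζ k := h1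
      _ ≤ (C₂ / k) * ζbar := h2
      _ = C₂ * ζbar / k := by ring
  -- lower bound on γ
  have hγlb : ∀ k : ℕ, 1 ≤ k → (ζlow / max 1 L) * (1 / k) ≤ γ k := by
    intro k hk
    have hk1 := hkcast k hk
    have hkpos : (0:ℝ) < k := by linarith
    have hmL : (0:ℝ) < max 1 L := lt_of_lt_of_le one_pos (le_max_left _ _)
    have hinv : (max 1 L)⁻¹ ≤ (max 1 ‖g k‖)⁻¹ := by
      apply inv_anti₀ (hmaxpos k)
      exact max_le_max le_rfl (hgL k hk)
    calc (ζlow / max 1 L) * (1 / k) = (1 / k) * ζlow * (max 1 L)⁻¹ := by ring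
      _ ≤ α k * ζ k * (max 1 ‖g k‖)⁻¹ := by
          apply mul_le_mul _ hinv (by positivity) _
          · exact mul_le_mul (hα k hk).1 (hζ k hk).1 hζlow.le (hαpos k hk).le
          · exact le_of_lt (mul_pos (hαpos k hk) (hζpos k hk))
      _ = γ k := rfl
  -- iterates stay in Ω
  have hmem : ∀ k : ℕ, 1 ≤ k → x k ∈ Ω := by
    intro k hk
    induction k with
    | zero => omega
    | succ m ih =>
      rcases Nat.lt_or_ge m 1 with hm | hm
      · interval_cases m
        exact hx1
      · rw [hupd m hm]
        exact hPmem _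
  -- error terms
  set e : EuclideanSpace ℝ (Fin n) → ℕ → ℝ :=
    fun xs k => |fk k (x k) - f (x k)| + |fk k xs - f xs| with hedef
  have henn : ∀ xs k, 0 ≤ e xs k := by intro xs k; simp only [hedef]; positivity
  -- the key inequality
  have hkey : ∀ xs ∈ Xstar, ∀ k : ℕ, 1 ≤ k →
      ‖x (k+1) - xs‖^2 + 2 * γ k * (f (x k) - f xs) ≤
        ‖x k - xs‖^2 + (2 * (C₂ * ζbar / k) * e xs k + (C₂ * ζbar / k)^2) := by
    intro xs hxs k hk
    obtain ⟨hxsΩ, _⟩ := hXmem xs hxs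
    have h1 : ‖x (k+1) - xs‖ ≤ ‖(x k - γ k • g k) - xs‖ := by
      calc ‖x (k+1) - xs‖ = ‖P (x k - γ k • g k) - P xs‖ := by
            rw [hupd k hk, hPfix xs hxsΩ]
        _ ≤ ‖(x k - γ k • g k) - xs‖ := hPnonexp _ _
    exact aux_key (x k) (x (k+1)) xs (g k) (fk k (x k)) (fk k xs) (f (x k)) (f xs)
      (γ k) (C₂ * ζbar / k) (hγpos k hk) h1 (hg k hk xs) (hγg k hk) (hγub k hk)
  -- summability of the error sequence
  have hBsum : ∀ xs ∈ Xstar,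
      Summable (fun j : ℕ => 2 * (C₂ * ζbar / (j+1:ℕ)) * e xs (j+1) + (C₂ * ζbar / (j+1:ℕ))^2) := by
    intro xs hxs
    apply Summable.add
    · have hs1 : Summable (fun j : ℕ => α (j+1) * e xs (j+1)) :=
        (summable_nat_add_iff 1).2 (herr3 xs hxs)
      apply (hs1.mul_left (2 * (C₂ * ζbar))).of_nonneg_of_le
      · intro j
        have := henn xs (j+1)
        have hj1 : (0:ℝ) < ((j+1:ℕ):ℝ) := by positivity
        positivity
      · intro j
        have hj : 1 ≤ j + 1 := by omega
        have hj1 : (1:ℝ) ≤ ((j+1:ℕ):ℝ) := hkcast _ hj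
        have hinvα : 1 / ((j+1:ℕ):ℝ) ≤ α (j+1) := (hα (j+1) hj).1
        have := henn xs (j+1)
        calc 2 * (C₂ * ζbar / (j+1:ℕ)) * e xs (j+1)
            = 2 * (C₂ * ζbar) * ((1 / ((j+1:ℕ):ℝ)) * e xs (j+1)) := by ring
          _ ≤ 2 * (C₂ * ζbar) * (α (j+1) * e xs (j+1)) := by
              apply mul_le_mul_of_nonneg_left _ (by positivity)
              exact mul_le_mul_of_nonneg_right hinvα this
    · have hp : Summable (fun k : ℕ => 1 / (k:ℝ)^2) :=
        Real.summable_one_div_nat_pow.mpr one_lt_two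
      have hs2 := ((summable_nat_add_iff 1).2 hp).mul_left ((C₂ * ζbar)^2)
      refine hs2.congr (fun j => ?_)
      rw [div_pow, mul_one_div]
  -- quasi-Fejér convergence of distances to any minimizer
  have hquasi : ∀ xs ∈ Xstar, ∃ l,
      Tendsto (fun j : ℕ => ‖x (j+1) - xs‖^2) atTop (nhds l) := by
    intro xs hxs
    apply aux_quasi_conv _
      (fun j : ℕ => 2 * (C₂ * ζbar / (j+1:ℕ)) * e xs (j+1) + (C₂ * ζbar / (j+1:ℕ))^2)
    · intro k; positivity
    · intro k
      have h1 := henn xs (k+1)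
      have h2 : (0:ℝ) < ((k+1:ℕ):ℝ) := by positivity
      positivity
    · intro j
      have hj : 1 ≤ j + 1 := by omega
      have hK := hkey xs hxs (j+1) hj
      have hD : 0 ≤ f (x (j+1)) - f xs := by
        have := (hXmem xs hxs).2 (x (j+1)) (hmem (j+1) hj)
        linarith
      have hγ := hγpos (j+1) hj
      have := mul_nonneg hγ.le hD
      linarith
    · exact hBsum xs hxs
  -- summability of γ * (f(x_k) - f*)
  have hD0 : ∀ j : ℕ, 0 ≤ f (x (j+1)) - f xs0 := by
    intro j
    have hj : 1 ≤ j + 1 := by omega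
    have := (hXmem xs0 hxs0).2 (x (j+1)) (hmem (j+1) hj)
    linarith
  have hsumD : Summable (fun j : ℕ => γ (j+1) * (f (x (j+1)) - f xs0)) := by
    set a : ℕ → ℝ := fun j => ‖x (j+1) - xs0‖^2 with hadef
    set b : ℕ → ℝ :=
      fun j => 2 * (C₂ * ζbar / (j+1:ℕ)) * e xs0 (j+1) + (C₂ * ζbar / (j+1:ℕ))^2 with hbdef
    have hbnn : ∀ j, 0 ≤ b j := by
      intro j
      have h1 := henn xs0 (j+1)
      have h2 : (0:ℝ) < ((j+1:ℕ):ℝ) := by positivity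
      simp only [hbdef]
      positivity
    have hbs : Summable b := hBsum xs0 hxs0
    have hpart : ∀ m : ℕ,
        (∑ j ∈ Finset.range m, 2 * (γ (j+1) * (f (x (j+1)) - f xs0))) + a m
          ≤ a 0 + ∑ j ∈ Finset.range m, b j := by
      intro m
      induction m with
      | zero => simp
      | succ m ih =>
        have hj : 1 ≤ m + 1 := by omega
        have hK := hkey xs0 hxs0 (m+1) hj
        rw [Finset.sum_range_succ, Finset.sum_range_succ]
        have : a (m+1) + 2 * (γ (m+1) * (f (x (m+1)) - f xs0)) ≤ a m + b m := by
          simp only [hadef, hbdef]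
          linarith
        linarith
    apply (summable_of_sum_range_le
      (c := (a 0 + ∑' j, b j) / 2) (f := fun j => γ (j+1) * (f (x (j+1)) - f xs0)) ?_ ?_)
    · intro j
      exact mul_nonneg (hγpos (j+1) (by omega)).le (hD0 j)
    · intro m
      have h1 := hpart m
      have h2 : ∑ j ∈ Finset.range m, b j ≤ ∑' j, b j :=
        Summable.sum_le_tsum _ (fun j _ => hbnn j) hbs
      have h3 : 0 ≤ a m := by simp only [hadef]; positivity
      have h4 : ∑ j ∈ Finset.range m, 2 * (γ (j+1) * (f (x (j+1)) - f xs0))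
          = 2 * ∑ j ∈ Finset.range m, γ (j+1) * (f (x (j+1)) - f xs0) := by
        rw [Finset.mul_sum]
      linarith
  -- frequently close to optimal value
  have hmL : (0:ℝ) < max 1 L := lt_of_lt_of_le one_pos (le_max_left _ _)
  have hfreqs : ∀ ε > 0, ∃ᶠ j in atTop, f (x (j+1)) - f xs0 < ε := by
    have hlow' : ∀ j : ℕ, ζlow / max 1 L / ((j:ℝ) + 1) ≤ γ (j+1) := by
      intro j
      have h5 := hγlb (j+1) (by omega)
      have hcast : ((j+1:ℕ):ℝ) = (j:ℝ) + 1 := by push_cast; ring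
      rw [hcast] at h5
      calc ζlow / max 1 L / ((j:ℝ) + 1)
          = ζlow / max 1 L * (1 / ((j:ℝ) + 1)) := by ring
        _ ≤ γ (j+1) := h5
    exact aux_freq (ζlow / max 1 L) (by positivity)
      (fun j => γ (j+1)) (fun j => f (x (j+1)) - f xs0) hlow' hsumD
  have hfreq2 : ∀ m : ℕ, ∃ᶠ j in atTop, f (x (j+1)) - f xs0 < 1 / ((m:ℝ) + 1) :=
    fun m => hfreqs _ (by positivity)
  obtain ⟨φ, hφmono, hφ⟩ := Filter.extraction_forall_of_frequently hfreq2
  have hdtend : Tendsto (fun m => f (x (φ m + 1)) - f xs0) atTop (nhds 0) :=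
    squeeze_zero (fun m => hD0 (φ m)) (fun m => (hφ m).le)
      tendsto_one_div_add_atTop_nhds_zero_nat
  -- boundedness and subsequence convergence
  obtain ⟨l0, hl0⟩ := hquasi xs0 hxs0
  obtain ⟨R, hR⟩ := hl0.bddAbove_range
  have hRmem : ∀ j : ℕ, ‖x (j+1) - xs0‖^2 ≤ R := by
    intro j
    exact hR ⟨j, rfl⟩
  have hymem : ∀ m : ℕ, x (φ m + 1) ∈ Metric.closedBall xs0 (Real.sqrt R) ∩ Ω := by
    intro m
    constructor
    · rw [Metric.mem_closedBall, dist_eq_norm]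
      have h1 := hRmem (φ m)
      have h2 : ‖x (φ m + 1) - xs0‖ = Real.sqrt (‖x (φ m + 1) - xs0‖^2) := by
        rw [Real.sqrt_sq (norm_nonneg _)]
      rw [h2]
      exact Real.sqrt_le_sqrt h1
    · exact hmem _ (by omega)
  obtain ⟨xt, hxtcl, σ, hσmono, hσtend⟩ :=
    tendsto_subseq_of_bounded
      (Metric.isBounded_closedBall.subset Set.inter_subset_left) hymem
  have hxtΩ : xt ∈ Ω := by
    have h1 := closure_mono (Set.inter_subset_right
      (s := Metric.closedBall xs0 (Real.sqrt R))) hxtcl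
    rwa [hΩclosed.closure_eq] at h1
  -- continuity of f and membership of limit in Xstar
  have hfc : Continuous f := hf.locallyLipschitz.continuous
  have hfxt : f xt = f xs0 := by
    have h1 : Tendsto (fun m => f (x (φ (σ m) + 1))) atTop (nhds (f xt)) :=
      (hfc.tendsto xt).comp hσtend
    have h2 : Tendsto (fun m => f (x (φ (σ m) + 1))) atTop (nhds (f xs0)) := by
      have h3 : Tendsto (fun m => f (x (φ (σ m) + 1)) - f xs0) atTop (nhds 0) :=
        hdtend.comp hσmono.tendsto_atTop
      have h4 := h3.add_const (f xs0)
      simpa using h4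
    exact tendsto_nhds_unique h1 h2
  have hxtX : xt ∈ Xstar := by
    rw [hXstar]
    exact ⟨hxtΩ, fun y hy => hfxt ▸ (hXmem xs0 hxs0).2 y hy⟩
  -- distances to xt converge, with limit 0 along the subsequence
  obtain ⟨l, hl⟩ := hquasi xt hxtX
  have hsub : Tendsto (fun m => ‖x (φ (σ m) + 1) - xt‖^2) atTop (nhds l) :=
    hl.comp (hφmono.comp hσmono).tendsto_atTop
  have hzero : Tendsto (fun m => ‖x (φ (σ m) + 1) - xt‖^2) atTop (nhds 0) := by
    have h1 : Tendsto (fun m => ‖x (φ (σ m) + 1) - xt‖) atTop (nhds 0) := by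
      rw [← tendsto_iff_norm_sub_tendsto_zero]
      exact hσtend
    have h2 := h1.pow 2
    simpa using h2
  have hl0' : l = 0 := tendsto_nhds_unique hsub hzero
  rw [hl0'] at hl
  -- conclude
  refine ⟨xt, hxtX, ?_⟩
  have hnorm : Tendsto (fun j : ℕ => ‖x (j+1) - xt‖) atTop (nhds 0) := by
    have h1 := (Real.continuous_sqrt.tendsto 0).comp hl
    simp only [Real.sqrt_zero] at h1
    refine h1.congr (fun j => ?_)
    exact Real.sqrt_sq (norm_nonneg _)
  have hshift : Tendsto (fun j : ℕ => x (j+1)) atTop (nhds xt) := by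
    rw [tendsto_iff_norm_sub_tendsto_zero]
    exact hnorm
  exact (tendsto_add_atTop_iff_nat 1).1 hshift
end

section
/- Theorem 1 (adaptive sample size tends to infinity, unbounded-sample case): let E = ℝⁿ (n-dimensional Euclidean space). For each integer N ≥ 1 let f^{(N)} : E → ℝ be convex and attain its minimum over Ω. Let (x_k)_{k≥1} ⊆ Ω, (N_k)_{k≥1} ⊆ ℕ with x_1 ∈ Ω and N_1 ≥ 1, and for every k ≥ 1: x_{k+1} = P(x_k − α_k·ζ_k·q_k⁻¹·g_k), where g_k is a subgradient of f^{(N_k)} at x_k, q_k = max(1, ‖g_k‖), ζ̲ ≤ ζ_k ≤ ζ̄, 1/k ≤ α_k ≤ C₂/k; and, with θ_k = ‖x_{k+1} − x_k‖, the sample size is updated by: N_{k+1} > N_k if θ_k < 1/N_k, and N_{k+1} = N_k otherwise. Then lim_{k→∞} N_k = ∞ (equivalently, lim_{k→∞} 1/N_k = 0). -/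
open scoped RealInnerProductSpace

/-- Theorem 1: the adaptive sample size tends to infinity (unbounded-sample case). -/
theorem stmt_11 {n : ℕ}
    (Ω : Set (EuclideanSpace ℝ (Fin n))) (hΩne : Ω.Nonempty)
    (hΩclosed : IsClosed Ω) (hΩconv : Convex ℝ Ω)
    (P : EuclideanSpace ℝ (Fin n) → EuclideanSpace ℝ (Fin n))
    (hPnonexp : ∀ u v, ‖P u - P v‖ ≤ ‖u - v‖)
    (hPmem : ∀ u, P u ∈ Ω)
    (hPfix : ∀ y ∈ Ω, P y = y)
    (C₂ ζlow ζbar : ℝ) (hC₂ : 0 < C₂) (hζlow : 0 < ζlow) (hζord : ζlow ≤ ζbar)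
    (F : ℕ → EuclideanSpace ℝ (Fin n) → ℝ)
    (hFconv : ∀ N : ℕ, 1 ≤ N → ConvexOn ℝ Set.univ (F N))
    (hFattain : ∀ N : ℕ, 1 ≤ N → ∃ xs ∈ Ω, ∀ y ∈ Ω, F N xs ≤ F N y)
    (x g : ℕ → EuclideanSpace ℝ (Fin n)) (N : ℕ → ℕ) (α ζ : ℕ → ℝ)
    (hx1 : x 1 ∈ Ω) (hN1 : 1 ≤ N 1)
    (hg : ∀ k : ℕ, 1 ≤ k → ∀ y, F (N k) (x k) + ⟪g k, y - x k⟫ ≤ F (N k) y)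
    (hζ : ∀ k : ℕ, 1 ≤ k → ζlow ≤ ζ k ∧ ζ k ≤ ζbar)
    (hα : ∀ k : ℕ, 1 ≤ k → 1 / (k : ℝ) ≤ α k ∧ α k ≤ C₂ / k)
    (hupd : ∀ k : ℕ, 1 ≤ k →
      x (k + 1) = P (x k - (α k * ζ k * (max 1 ‖g k‖)⁻¹) • g k))
    (hNup : ∀ k : ℕ, 1 ≤ k →
      (‖x (k + 1) - x k‖ < 1 / (N k : ℝ) → N k < N (k + 1)) ∧
      (¬ (‖x (k + 1) - x k‖ < 1 / (N k : ℝ)) → N (k + 1) = N k)) :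
    Filter.Tendsto N Filter.atTop Filter.atTop := by

  classical
  have hxΩ : ∀ k : ℕ, 1 ≤ k → x k ∈ Ω := by
    intro k hk
    induction k with
    | zero => omega
    | succ m ih =>
      rcases Nat.lt_or_ge 1 (m + 1) with h | h
      · have hm : 1 ≤ m := by omega
        rw [hupd m hm]; exact hPmem _
      · have : m = 0 := by omega
        subst this; simpa using hx1
  have hθ : ∀ k : ℕ, 1 ≤ k → ‖x (k + 1) - x k‖ ≤ C₂ * ζbar / k := by
    intro k hk
    have hkR : (0 : ℝ) < k := by exact_mod_cast hk
    set s : ℝ := α k * ζ k * (max 1 ‖g k‖)⁻¹ with hs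
    have hα1 := (hα k hk).1
    have hα2 := (hα k hk).2
    have hαpos : 0 < α k := lt_of_lt_of_le (by positivity) hα1
    have hζ1 := (hζ k hk).1
    have hζ2 := (hζ k hk).2
    have hζpos : 0 < ζ k := lt_of_lt_of_le hζlow hζ1
    have hmaxpos : (0 : ℝ) < max 1 ‖g k‖ := lt_of_lt_of_le one_pos (le_max_left _ _)
    have hspos : 0 ≤ s := by positivity
    have h1 : ‖x (k + 1) - x k‖ ≤ ‖s • g k‖ := by
      rw [hupd k hk]
      calc ‖P (x k - s • g k) - x k‖
          = ‖P (x k - s • g k) - P (x k)‖ := by rw [hPfix (x k) (hxΩ k hk)]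
        _ ≤ ‖(x k - s • g k) - x k‖ := hPnonexp _ _
        _ = ‖s • g k‖ := by rw [sub_sub_cancel_left, norm_neg]
    have h2 : ‖s • g k‖ ≤ α k * ζ k := by
      rw [norm_smul, Real.norm_eq_abs, abs_of_nonneg hspos, hs]
      have hgle : ‖g k‖ ≤ max 1 ‖g k‖ := le_max_right _ _
      have : (max 1 ‖g k‖)⁻¹ * ‖g k‖ ≤ 1 := by
        rw [inv_mul_le_iff₀ hmaxpos, mul_one]; exact hgle
      calc α k * ζ k * (max 1 ‖g k‖)⁻¹ * ‖g k‖
          = α k * ζ k * ((max 1 ‖g k‖)⁻¹ * ‖g k‖) := by ring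
        _ ≤ α k * ζ k * 1 := by
            apply mul_le_mul_of_nonneg_left this (by positivity)
        _ = α k * ζ k := mul_one _
    have h3 : α k * ζ k ≤ C₂ / k * ζbar := by
      have hζbar : 0 < ζbar := lt_of_lt_of_le hζlow hζord
      apply mul_le_mul hα2 hζ2 (le_of_lt hζpos) (by positivity)
    calc ‖x (k + 1) - x k‖ ≤ α k * ζ k := le_trans h1 h2
      _ ≤ C₂ / k * ζbar := h3
      _ = C₂ * ζbar / k := by ring
  have hmono : ∀ k : ℕ, 1 ≤ k → N k ≤ N (k + 1) := by
    intro k hk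
    by_cases h : ‖x (k + 1) - x k‖ < 1 / (N k : ℝ)
    · exact le_of_lt ((hNup k hk).1 h)
    · exact ((hNup k hk).2 h).ge
  have hmono' : ∀ j k : ℕ, 1 ≤ k → k ≤ j → N k ≤ N j := by
    intro j
    induction j with
    | zero => intro k hk hkj; omega
    | succ m ih =>
      intro k hk hkj
      rcases Nat.lt_or_ge m k with h | h
      · have : k = m + 1 := by omega
        subst this; exact le_refl _
      · exact le_trans (ih k hk h) (hmono m (by omega))
  have hNpos : ∀ k : ℕ, 1 ≤ k → 1 ≤ N k := fun k hk =>
    le_trans hN1 (hmono' k 1 le_rfl hk)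
  have hkey : ∀ k : ℕ, 1 ≤ k → ∃ j, k ≤ j ∧ N k < N j := by
    intro k hk
    by_contra hcon
    push_neg at hcon
    have hconst : ∀ j, k ≤ j → N j = N k := fun j hj =>
      le_antisymm (hcon j hj) (hmono' j k hk hj)
    obtain ⟨m, hm⟩ := exists_nat_gt (C₂ * ζbar * N k)
    set j := max k m with hj
    have hjk : k ≤ j := le_max_left _ _
    have hj1 : 1 ≤ j := le_trans hk hjk
    have hjR : (0 : ℝ) < j := by exact_mod_cast hj1
    have hNkR : (0 : ℝ) < N k := by exact_mod_cast hNpos k hk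
    have hmj : (C₂ * ζbar * N k : ℝ) < j := by
      have : (m : ℝ) ≤ j := by exact_mod_cast le_max_right k m
      linarith
    have hlt : ‖x (j + 1) - x j‖ < 1 / (N j : ℝ) := by
      have h1 : C₂ * ζbar / j < 1 / (N k : ℝ) := by
        rw [div_lt_div_iff₀ hjR hNkR]
        linarith
      calc ‖x (j + 1) - x j‖ ≤ C₂ * ζbar / j := hθ j hj1
        _ < 1 / (N k : ℝ) := h1
        _ = 1 / (N j : ℝ) := by rw [hconst j hjk]
    have := (hNup j hj1).1 hlt
    have h2 := hconst j hjk
    have h3 := hcon (j + 1) (by omega)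
    omega
  rw [Filter.tendsto_atTop]
  intro b
  have : ∃ k, 1 ≤ k ∧ b ≤ N k := by
    induction b with
    | zero => exact ⟨1, le_rfl, Nat.zero_le _⟩
    | succ c ih =>
      obtain ⟨k, hk1, hck⟩ := ih
      obtain ⟨j, hkj, hlt⟩ := hkey k hk1
      exact ⟨j, le_trans hk1 hkj, by omega⟩
  obtain ⟨k, hk1, hbk⟩ := this
  filter_upwards [Filter.eventually_ge_atTop k] with j hj
  exact le_trans hbk (hmono' j k hk1 hj)
end

section
/- Theorem 3 (convergence for finite sum problems): let E = ℝⁿ (n-dimensional Euclidean space) and let N_max ≥ 1 be an integer. For each integer N with 1 ≤ N ≤ N_max let f^{(N)} : E → ℝ be convex and attain its minimum over Ω. Let (x_k)_{k≥1} ⊆ Ω, (N_k)_{k≥1} ⊆ ℕ with x_1 ∈ Ω and 1 ≤ N_1 ≤ N_max, and for every k ≥ 1: x_{k+1} = P(x_k − α_k·ζ_k·q_k⁻¹·g_k), where g_k is a subgradient of f^{(N_k)} at x_k, q_k = max(1, ‖g_k‖), ζ̲ ≤ ζ_k ≤ ζ̄, 1/k ≤ α_k ≤ C₂/k; and, with θ_k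 = ‖x_{k+1} − x_k‖ and h(N) = (N_max − N)/N_max, the sample size satisfies: N_k < N_{k+1} ≤ N_max if θ_k < h(N_k), and N_{k+1} = N_k otherwise. Then N_k = N_max for all sufficiently large k, and the sequence (x_k) converges to a point x̃ ∈ Ω with f^{(N_max)}(x̃) = min_{y ∈ Ω} f^{(N_max)}(y). -/
open scoped RealInnerProductSpace
open Filter Topology Finset Metric

/-!
Since `‖x (k+1) - x k‖ ≤ α k ζ k = O(1/k)`, the displacement eventually drops below
`h(N) ≥ 1 / Nmax` for every `N < Nmax`, so the sample size increases at every step until it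
reaches `Nmax` and stays there. From then on the iteration is the projected subgradient method
for `f = F Nmax` with normalised steps `t k = α k ζ k / max 1 ‖g k‖`, which satisfy the
quasi-Fejér inequality `‖x (k+1) - y‖² ≤ ‖x k - y‖² - 2 t k (f (x k) - f y) + (C₂ ζbar / k)²`
for every `y ∈ Ω`. Against a minimiser this keeps the iterates bounded, hence the subgradients
bounded, so `∑ t k = ∞` while `∑ t k (f (x k) - min f) < ∞`. Thus `f (x k)` comes arbitrarily
close to `min f` along a subsequence, whose cluster point `x̃` is a minimiser; the quasi-Fejér
inequality at `x̃` makes `‖x k - x̃‖` converge, and its limit is `0`.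
-/

theorem exists_tendsto_and_summable_of_le_sub_add {a d e : ℕ → ℝ} (ha : ∀ k, 0 ≤ a k)
    (hd : ∀ k, 0 ≤ d k) (he : Summable e) (h : ∀ k, a (k + 1) ≤ a k - d k + e k) :
    (∃ L, Tendsto a atTop (𝓝 L)) ∧ Summable d := by
  set b : ℕ → ℝ := fun k => a k + ∑ i ∈ range k, d i - ∑ i ∈ range k, e i
  have hb : Antitone b := antitone_nat_of_succ_le fun k => by
    simp only [b, sum_range_succ]; linarith [h k]
  obtain ⟨E, hE⟩ := he.tendsto_sum_tsum_nat.bddAbove_range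
  have hE' : ∀ k, ∑ i ∈ range k, e i ≤ E := fun k => hE ⟨k, rfl⟩
  have hdsum : Summable d := summable_of_sum_range_le (c := a 0 + E) hd fun k => by
    have := hb (Nat.zero_le k)
    simp only [b, sum_range_zero] at this
    linarith [ha k, hE' k]
  have hbd : BddBelow (Set.range b) := ⟨-E, by
    rintro _ ⟨k, rfl⟩
    linarith [ha k, hE' k, sum_nonneg fun i (_ : i ∈ range k) => hd i]⟩
  refine ⟨⟨_, ((tendsto_atTop_ciInf hb hbd).sub hdsum.tendsto_sum_tsum_nat).add
    he.tendsto_sum_tsum_nat |>.congr fun k => by simp only [b]; ring⟩, hdsum⟩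

theorem frequently_lt_of_summable_mul_s12 {t u : ℕ → ℝ} (ht0 : ∀ k, 0 ≤ t k) (ht : ¬Summable t)
    (htu : Summable fun k => t k * u k) {ε : ℝ} (hε : 0 < ε) : ∃ᶠ k in atTop, u k < ε := by
  refine fun hev => ht <| (htu.mul_left ε⁻¹).of_norm_bounded_eventually_nat ?_
  filter_upwards [hev] with k hk
  rw [Real.norm_of_nonneg (ht0 k), le_inv_mul_iff₀ hε, mul_comm]
  exact mul_le_mul_of_nonneg_left (not_lt.1 hk) (ht0 k)

theorem not_summable_and_summable_sq_of_le_div {s : ℕ → ℝ} {a b : ℝ} (ha : 0 < a)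
    (hs : ∀ k ≥ 1, a / k ≤ s k ∧ s k ≤ b / k) :
    ¬Summable s ∧ Summable fun k => s k ^ 2 := by
  constructor
  · refine fun hsum => Real.not_summable_one_div_natCast <|
      (hsum.mul_left a⁻¹).of_norm_bounded_eventually_nat ?_
    filter_upwards [eventually_ge_atTop 1] with k hk
    have hk0 : (0 : ℝ) < k := by exact_mod_cast hk
    rw [Real.norm_of_nonneg (by positivity), le_inv_mul_iff₀ ha, ← div_eq_mul_one_div]
    exact (hs k hk).1
  · refine Summable.of_norm_bounded_eventually_nat
      ((Real.summable_one_div_nat_pow.2 one_lt_two).mul_left (b ^ 2)) ?_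
    filter_upwards [eventually_ge_atTop 1] with k hk
    have hk0 : (0 : ℝ) < k := by exact_mod_cast hk
    obtain ⟨hlo, hhi⟩ := hs k hk
    have : 0 ≤ s k := (div_pos ha hk0).le.trans hlo
    rw [Real.norm_of_nonneg (by positivity), ← div_eq_mul_one_div, ← div_pow]
    exact pow_le_pow_left₀ this hhi 2

theorem div_le_mul_and_mul_le_mul_div {a c z zlow zbar k : ℝ} (hzlow : 0 < zlow)
    (ha : 1 / k ≤ a ∧ a ≤ c / k) (hz : zlow ≤ z ∧ z ≤ zbar) (hk : 0 < k) :
    zlow / k ≤ a * z ∧ a * z ≤ c * zbar / k := by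
  obtain ⟨ha1, ha2⟩ := ha
  obtain ⟨hz1, hz2⟩ := hz
  have h1k : 0 < 1 / k := by positivity
  constructor
  · calc zlow / k = 1 / k * zlow := by ring
      _ ≤ a * z := mul_le_mul ha1 hz1 hzlow.le (h1k.le.trans ha1)
  · calc a * z ≤ c / k * zbar :=
          mul_le_mul ha2 hz2 (hzlow.le.trans hz1) (h1k.le.trans (ha1.trans ha2))
      _ = c * zbar / k := by ring

theorem tendsto_of_tendsto_norm_sub_of_subseq {F : Type*} [SeminormedAddCommGroup F]
    {x : ℕ → F} {y : F} {r : ℝ} (hr : Tendsto (fun k => ‖x k - y‖) atTop (𝓝 r))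
    {φ : ℕ → ℕ} (hφ : Tendsto φ atTop atTop) (hsub : Tendsto (x ∘ φ) atTop (𝓝 y)) :
    Tendsto x atTop (𝓝 y) := by
  obtain rfl : r = 0 :=
    tendsto_nhds_unique (hr.comp hφ) (tendsto_iff_norm_sub_tendsto_zero.1 hsub)
  exact tendsto_iff_norm_sub_tendsto_zero.2 hr

section QuasiFejer

variable {E : Type*} [NormedAddCommGroup E] {Ω : Set E} {f : E → ℝ} {x : ℕ → E} {t e : ℕ → ℝ}

theorem exists_tendsto_norm_sub_and_summable_of_quasiFejer (hx : ∀ k, x k ∈ Ω)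
    (ht0 : ∀ k, 0 ≤ t k) (he : Summable e)
    (hfej : ∀ k, ∀ y ∈ Ω,
      ‖x (k + 1) - y‖ ^ 2 ≤ ‖x k - y‖ ^ 2 - 2 * t k * (f (x k) - f y) + e k)
    {y : E} (hy : y ∈ Ω) (hmin : IsMinOn f Ω y) :
    (∃ r, Tendsto (fun k => ‖x k - y‖) atTop (𝓝 r)) ∧
      Summable fun k => t k * (f (x k) - f y) := by
  obtain ⟨⟨L, hL⟩, hsum⟩ := exists_tendsto_and_summable_of_le_sub_add
    (a := fun k => ‖x k - y‖ ^ 2) (d := fun k => t k * (2 * (f (x k) - f y)))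
    (fun k => by positivity)
    (fun k => mul_nonneg (ht0 k) (by linarith [isMinOn_iff.1 hmin _ (hx k)])) he
    (fun k => by linarith [hfej k y hy])
  exact ⟨⟨√L, by simpa only [Real.sqrt_sq (norm_nonneg _)] using hL.sqrt⟩,
    (hsum.mul_left (1 / 2)).congr fun k => by ring⟩

theorem exists_tendsto_isMinOn_of_quasiFejer [ProperSpace E] (hΩ : IsClosed Ω)
    (hf : Continuous f) {xs : E} (hxs : xs ∈ Ω) (hmin : IsMinOn f Ω xs) (hx : ∀ k, x k ∈ Ω)
    (ht0 : ∀ k, 0 ≤ t k) (ht : ¬Summable t) (he : Summable e)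
    (hfej : ∀ k, ∀ y ∈ Ω,
      ‖x (k + 1) - y‖ ^ 2 ≤ ‖x k - y‖ ^ 2 - 2 * t k * (f (x k) - f y) + e k) :
    ∃ xt ∈ Ω, IsMinOn f Ω xt ∧ Tendsto x atTop (𝓝 xt) := by
  obtain ⟨⟨r, hr⟩, hsum⟩ :=
    exists_tendsto_norm_sub_and_summable_of_quasiFejer hx ht0 he hfej hxs hmin
  obtain ⟨φ, hφ, hφmin⟩ := extraction_forall_of_frequently fun m : ℕ =>
    frequently_lt_of_summable_mul_s12 ht0 ht hsum (Nat.one_div_pos_of_nat (n := m) (α := ℝ))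
  obtain ⟨R, hR⟩ := hr.bddAbove_range
  obtain ⟨xt, -, ψ, hψ, hlim⟩ := tendsto_subseq_of_bounded (isBounded_closedBall (x := xs))
    (x := x ∘ φ) fun j => mem_closedBall_iff_norm.2 (hR ⟨φ j, rfl⟩)
  have hxt : xt ∈ Ω := hΩ.mem_of_tendsto hlim (.of_forall fun j => hx _)
  have hxtmin : IsMinOn f Ω xt := by
    refine isMinOn_iff.2 fun y hy => le_trans ?_ (isMinOn_iff.1 hmin y hy)
    have hε := (tendsto_one_div_add_atTop_nhds_zero_nat.comp hψ.tendsto_atTop).const_add (f xs)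
    rw [add_zero] at hε
    exact le_of_tendsto_of_tendsto' ((hf.tendsto xt).comp hlim) hε fun j => by
      have := hφmin (ψ j)
      simp only [Function.comp_apply]
      linarith
  obtain ⟨⟨r', hr'⟩, -⟩ :=
    exists_tendsto_norm_sub_and_summable_of_quasiFejer hx ht0 he hfej hxt hxtmin
  exact ⟨xt, hxt, hxtmin,
    tendsto_of_tendsto_norm_sub_of_subseq hr' (hφ.comp hψ).tendsto_atTop hlim⟩

end QuasiFejer

-- `θ k` stands for `‖x (k+1) - x k‖` and `(Nmax - N k) / Nmax` for `h (N k)`.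
def IsSampleSizeUpdate (Nmax : ℕ) (θ : ℕ → ℝ) (N : ℕ → ℕ) : Prop :=
  ∀ k : ℕ, 1 ≤ k →
    (θ k < ((Nmax : ℝ) - N k) / Nmax → N k < N (k + 1) ∧ N (k + 1) ≤ Nmax) ∧
    (¬ (θ k < ((Nmax : ℝ) - N k) / Nmax) → N (k + 1) = N k)

theorem IsSampleSizeUpdate.eventually_eq {Nmax : ℕ} {θ : ℕ → ℝ} {N : ℕ → ℕ}
    (hup : IsSampleSizeUpdate Nmax θ N) (hNmax : 1 ≤ Nmax) (hN1 : N 1 ≤ Nmax)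
    (hθ : Tendsto θ atTop (𝓝 0)) : ∀ᶠ k in atTop, N k = Nmax := by
  have hmono : ∀ k ≥ 1, N k ≤ N (k + 1) ∧ (N k ≤ Nmax → N (k + 1) ≤ Nmax) := fun k hk => by
    by_cases hc : θ k < ((Nmax : ℝ) - N k) / Nmax
    · exact ⟨((hup k hk).1 hc).1.le, fun _ => ((hup k hk).1 hc).2⟩
    · rw [(hup k hk).2 hc]; exact ⟨le_rfl, id⟩
  have hle : ∀ k ≥ 1, N k ≤ Nmax :=
    Nat.le_induction hN1 fun k hk ih => (hmono k hk).2 ih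
  have hNmax' : (0 : ℝ) < Nmax := by exact_mod_cast hNmax
  obtain ⟨K, hK⟩ := eventually_atTop.1 <| (hθ.eventually (gt_mem_nhds (one_div_pos.2 hNmax'))).and
    (eventually_ge_atTop 1)
  -- once `θ k < 1 / Nmax`, every sample size below `Nmax` triggers an increase
  have hstep : ∀ k ≥ K, min (N k + 1) Nmax ≤ N (k + 1) := fun k hk => by
    obtain ⟨hθk, hk1⟩ := hK k hk
    rcases lt_or_ge (N k) Nmax with hlt | hge
    · have : (1 : ℝ) ≤ Nmax - N k := by
        rw [le_sub_iff_add_le, add_comm]; exact_mod_cast hlt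
      have hc : θ k < ((Nmax : ℝ) - N k) / Nmax :=
        hθk.trans_le (div_le_div_of_nonneg_right this hNmax'.le)
      exact min_le_left _ _ |>.trans ((hup k hk1).1 hc).1
    · exact (min_le_right _ _).trans (hge.trans (hmono k hk1).1)
  have hgrow : ∀ j, min j Nmax ≤ N (K + j) := fun j => by
    induction j with
    | zero => simp
    | succ j ih => have := hstep (K + j) (by omega); rw [← add_assoc]; omega
  filter_upwards [eventually_ge_atTop (K + Nmax)] with k hk
  have h1 := hgrow (k - K)
  have h2 := hle k (by have := (hK K le_rfl).2; omega)
  rw [Nat.add_sub_cancel' (by omega)] at h1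
  omega

theorem norm_map_sub_sub_le {E : Type*} [SeminormedAddCommGroup E] {P : E → E}
    (hP : ∀ u v, ‖P u - P v‖ ≤ ‖u - v‖) {x : E} (hx : P x = x) (v : E) :
    ‖P (x - v) - x‖ ≤ ‖v‖ := by
  simpa [hx] using hP (x - v) x

theorem norm_smul_inv_max_one_norm_le {E : Type*} [SeminormedAddCommGroup E] [NormedSpace ℝ E]
    {s : ℝ} (hs : 0 ≤ s) (g : E) : ‖(s * (max 1 ‖g‖)⁻¹) • g‖ ≤ s := by
  have hq : 0 < max 1 ‖g‖ := lt_max_of_lt_left one_pos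
  rw [norm_smul, Real.norm_of_nonneg (by positivity), mul_assoc, ← div_eq_inv_mul]
  exact mul_le_of_le_one_right hs ((div_le_one hq).2 (le_max_right _ _))

section InnerProduct

variable {E : Type*} [NormedAddCommGroup E] [InnerProductSpace ℝ E]

theorem sq_norm_map_sub_smul_sub_le {P : E → E} (hP : ∀ u v, ‖P u - P v‖ ≤ ‖u - v‖)
    {f : E → ℝ} {x g y : E} (hg : ∀ z, f x + ⟪g, z - x⟫ ≤ f z) (hy : P y = y) {t : ℝ}
    (ht : 0 ≤ t) :
    ‖P (x - t • g) - y‖ ^ 2 ≤ ‖x - y‖ ^ 2 - 2 * t * (f x - f y) + ‖t • g‖ ^ 2 := by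
  have hPy : ‖P (x - t • g) - y‖ ≤ ‖(x - y) - t • g‖ := by
    simpa only [hy, sub_right_comm] using hP (x - t • g) y
  have hsub : f x - f y ≤ ⟪x - y, g⟫ := by
    have := hg y
    rw [← neg_sub x y, inner_neg_right, real_inner_comm] at this
    linarith
  calc ‖P (x - t • g) - y‖ ^ 2 ≤ ‖(x - y) - t • g‖ ^ 2 := by gcongr
    _ = ‖x - y‖ ^ 2 - 2 * t * ⟪x - y, g⟫ + ‖t • g‖ ^ 2 := by
      rw [norm_sub_sq_real, inner_smul_right]; ring
    _ ≤ ‖x - y‖ ^ 2 - 2 * t * (f x - f y) + ‖t • g‖ ^ 2 := by gcongr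

theorem norm_le_of_subgradient {f : E → ℝ} {x g : E} {M : ℝ}
    (hg : ∀ y, f x + ⟪g, y - x⟫ ≤ f y) (hM : ∀ y ∈ closedBall x 1, f y ≤ M) :
    ‖g‖ ≤ M - f x := by
  rcases eq_or_ne g 0 with rfl | hg0
  · simpa using hM x (mem_closedBall_self zero_le_one)
  have hn : 0 < ‖g‖ := norm_pos_iff.2 hg0
  -- test the subgradient inequality at the unit vector in the direction of `g`
  have hy : x + ‖g‖⁻¹ • g ∈ closedBall x 1 := by
    rw [mem_closedBall_iff_norm, add_sub_cancel_left, norm_smul, norm_inv, norm_norm,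
      inv_mul_cancel₀ hn.ne']
  have := hg (x + ‖g‖⁻¹ • g)
  rw [add_sub_cancel_left, real_inner_smul_right, real_inner_self_eq_norm_sq, sq,
    ← mul_assoc, inv_mul_cancel₀ hn.ne', one_mul] at this
  linarith [hM _ hy]

theorem exists_norm_le_of_subgradient [ProperSpace E] {f : E → ℝ} (hf : Continuous f)
    {x g : ℕ → E} {c : E} {R : ℝ} (hx : ∀ k, x k ∈ closedBall c R)
    (hg : ∀ k y, f (x k) + ⟪g k, y - x k⟫ ≤ f y) : ∃ G, ∀ k, ‖g k‖ ≤ G := by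
  obtain ⟨C, hC⟩ := (isCompact_closedBall c (R + 1)).exists_bound_of_continuousOn hf.continuousOn
  simp only [Real.norm_eq_abs, abs_le] at hC
  have hball : ∀ k, closedBall (x k) 1 ⊆ closedBall c (R + 1) := fun k =>
    closedBall_subset_closedBall' (by linarith [mem_closedBall'.1 (hx k), dist_comm c (x k)])
  refine ⟨C + C, fun k => ?_⟩
  have := norm_le_of_subgradient (M := C) (hg k) fun y hy => (hC y (hball k hy)).2
  linarith [(hC _ (hball k (mem_closedBall_self zero_le_one))).1]

end InnerProduct

section Subgradient

variable {E : Type*} [NormedAddCommGroup E] [InnerProductSpace ℝ E] [FiniteDimensional ℝ E]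

theorem exists_tendsto_isMinOn_of_normalized_projected_subgradient {Ω : Set E}
    (hΩ : IsClosed Ω) {P : E → E} (hP : ∀ u v, ‖P u - P v‖ ≤ ‖u - v‖)
    (hPfix : ∀ y ∈ Ω, P y = y) {f : E → ℝ} (hf : ConvexOn ℝ Set.univ f) {xs : E} (hxs : xs ∈ Ω)
    (hmin : IsMinOn f Ω xs) {x g : ℕ → E} {s : ℕ → ℝ} (hx : ∀ k, x k ∈ Ω)
    (hg : ∀ k y, f (x k) + ⟪g k, y - x k⟫ ≤ f y) (hs0 : ∀ k, 0 ≤ s k) (hs : ¬Summable s)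
    (hs2 : Summable fun k => s k ^ 2)
    (hupd : ∀ k, x (k + 1) = P (x k - (s k * (max 1 ‖g k‖)⁻¹) • g k)) :
    ∃ xt ∈ Ω, IsMinOn f Ω xt ∧ Tendsto x atTop (𝓝 xt) := by
  have hfc : Continuous f := hf.locallyLipschitz.continuous
  set t : ℕ → ℝ := fun k => s k * (max 1 ‖g k‖)⁻¹
  have hq : ∀ k, 0 < max 1 ‖g k‖ := fun k => lt_max_of_lt_left one_pos
  have ht0 : ∀ k, 0 ≤ t k := fun k => mul_nonneg (hs0 k) (inv_nonneg.2 (hq k).le)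
  have hfej : ∀ k, ∀ y ∈ Ω,
      ‖x (k + 1) - y‖ ^ 2 ≤ ‖x k - y‖ ^ 2 - 2 * t k * (f (x k) - f y) + s k ^ 2 :=
    fun k y hy => by
      rw [hupd k]
      refine (sq_norm_map_sub_smul_sub_le hP (hg k) (hPfix y hy) (ht0 k)).trans ?_
      gcongr
      exact norm_smul_inv_max_one_norm_le (hs0 k) (g k)
  -- bounded iterates have bounded subgradients, so the normalisation keeps `∑ t k = ∞`
  obtain ⟨⟨r, hr⟩, -⟩ :=
    exists_tendsto_norm_sub_and_summable_of_quasiFejer hx ht0 hs2 hfej hxs hmin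
  obtain ⟨R, hR⟩ := hr.bddAbove_range
  obtain ⟨G, hG⟩ := exists_norm_le_of_subgradient hfc (c := xs) (R := R)
    (fun k => mem_closedBall_iff_norm.2 (hR ⟨k, rfl⟩)) hg
  have ht : ¬Summable t := fun hsum =>
    hs <| (hsum.mul_left (max 1 G)).of_nonneg_of_le hs0 fun k =>
      calc s k = max 1 ‖g k‖ * t k := by rw [mul_left_comm, mul_inv_cancel₀ (hq k).ne', mul_one]
        _ ≤ max 1 G * t k := by gcongr; exacts [ht0 k, hG k]
  exact exists_tendsto_isMinOn_of_quasiFejer hΩ hfc hxs hmin hx ht0 ht hs2 hfej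

end Subgradient

theorem stmt_12_general {n : ℕ}
    (Ω : Set (EuclideanSpace ℝ (Fin n)))
    (hΩclosed : IsClosed Ω)
    (P : EuclideanSpace ℝ (Fin n) → EuclideanSpace ℝ (Fin n))
    (hPnonexp : ∀ u v, ‖P u - P v‖ ≤ ‖u - v‖)
    (hPmem : ∀ u, P u ∈ Ω)
    (hPfix : ∀ y ∈ Ω, P y = y)
    (C₂ ζlow ζbar : ℝ) (hζlow : 0 < ζlow)
    (Nmax : ℕ) (hNmax : 1 ≤ Nmax)
    (F : ℕ → EuclideanSpace ℝ (Fin n) → ℝ)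
    (hFconv : ∀ N : ℕ, 1 ≤ N → N ≤ Nmax → ConvexOn ℝ Set.univ (F N))
    (hFattain : ∀ N : ℕ, 1 ≤ N → N ≤ Nmax → ∃ xs ∈ Ω, ∀ y ∈ Ω, F N xs ≤ F N y)
    (x g : ℕ → EuclideanSpace ℝ (Fin n)) (N : ℕ → ℕ) (α ζ : ℕ → ℝ)
    (hx1 : x 1 ∈ Ω) (hN1max : N 1 ≤ Nmax)
    (hg : ∀ k : ℕ, 1 ≤ k → ∀ y, F (N k) (x k) + ⟪g k, y - x k⟫ ≤ F (N k) y)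
    (hζ : ∀ k : ℕ, 1 ≤ k → ζlow ≤ ζ k ∧ ζ k ≤ ζbar)
    (hα : ∀ k : ℕ, 1 ≤ k → 1 / (k : ℝ) ≤ α k ∧ α k ≤ C₂ / k)
    (hupd : ∀ k : ℕ, 1 ≤ k →
      x (k + 1) = P (x k - (α k * ζ k * (max 1 ‖g k‖)⁻¹) • g k))
    (hNup : ∀ k : ℕ, 1 ≤ k →
      (‖x (k + 1) - x k‖ < ((Nmax : ℝ) - N k) / Nmax →
        N k < N (k + 1) ∧ N (k + 1) ≤ Nmax) ∧
      (¬ (‖x (k + 1) - x k‖ < ((Nmax : ℝ) - N k) / Nmax) → N (k + 1) = N k)) :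
    (∃ k₀ : ℕ, ∀ k : ℕ, k₀ ≤ k → N k = Nmax) ∧
    ∃ xtil ∈ Ω, (∀ y ∈ Ω, F Nmax xtil ≤ F Nmax y) ∧
      Filter.Tendsto x Filter.atTop (nhds xtil) := by
  have hxΩ : ∀ k ≥ 1, x k ∈ Ω := Nat.le_induction hx1 fun k hk _ => hupd k hk ▸ hPmem _
  have hs : ∀ k ≥ 1, ζlow / k ≤ α k * ζ k ∧ α k * ζ k ≤ C₂ * ζbar / k :=
    fun k hk => div_le_mul_and_mul_le_mul_div hζlow (hα k hk) (hζ k hk) (by exact_mod_cast hk)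
  have hs0 : ∀ k ≥ 1, 0 ≤ α k * ζ k := fun k hk =>
    (div_pos hζlow (by exact_mod_cast hk)).le.trans (hs k hk).1
  have hθ : Tendsto (fun k => ‖x (k + 1) - x k‖) atTop (𝓝 0) := by
    refine squeeze_zero' (.of_forall fun k => norm_nonneg _) ?_
      (tendsto_const_div_atTop_nhds_zero_nat (C₂ * ζbar))
    filter_upwards [eventually_ge_atTop 1] with k hk
    rw [hupd k hk]
    exact (norm_map_sub_sub_le hPnonexp (hPfix _ (hxΩ k hk)) _).trans
      ((norm_smul_inv_max_one_norm_le (hs0 k hk) _).trans (hs k hk).2)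
  obtain ⟨K, hK⟩ := eventually_atTop.1 <|
    (show IsSampleSizeUpdate Nmax _ N from hNup).eventually_eq hNmax hN1max hθ
  have hK1 : ∀ j, 1 ≤ j + (K + 1) := fun j => by omega
  have hKN : ∀ j, N (j + (K + 1)) = Nmax := fun j => hK _ (by omega)
  obtain ⟨hsdiv, hsq⟩ := not_summable_and_summable_sq_of_le_div hζlow hs
  obtain ⟨xs, hxs, hmin⟩ := hFattain Nmax hNmax le_rfl
  obtain ⟨xt, hxt, hxtmin, hlim⟩ :=
    exists_tendsto_isMinOn_of_normalized_projected_subgradient hΩclosed hPnonexp hPfix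
      (hFconv Nmax hNmax le_rfl) hxs (isMinOn_iff.2 hmin) (x := fun j => x (j + (K + 1)))
      (g := fun j => g (j + (K + 1))) (s := fun j => α (j + (K + 1)) * ζ (j + (K + 1)))
      (fun j => hxΩ _ (hK1 j)) (fun j => hKN j ▸ hg _ (hK1 j)) (fun j => hs0 _ (hK1 j))
      (fun h => hsdiv ((summable_nat_add_iff _).1 h)) ((summable_nat_add_iff _).2 hsq)
      (fun j => by rw [Nat.add_right_comm]; exact hupd _ (hK1 j))
  exact ⟨⟨K, hK⟩, xt, hxt, isMinOn_iff.1 hxtmin, (tendsto_add_atTop_iff_nat _).1 hlim⟩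

/-- Theorem 3: convergence for finite sum problems. -/
theorem stmt_12 {n : ℕ}
    (Ω : Set (EuclideanSpace ℝ (Fin n))) (hΩne : Ω.Nonempty)
    (hΩclosed : IsClosed Ω) (hΩconv : Convex ℝ Ω)
    (P : EuclideanSpace ℝ (Fin n) → EuclideanSpace ℝ (Fin n))
    (hPnonexp : ∀ u v, ‖P u - P v‖ ≤ ‖u - v‖)
    (hPmem : ∀ u, P u ∈ Ω)
    (hPfix : ∀ y ∈ Ω, P y = y)
    (C₂ ζlow ζbar : ℝ) (hC₂ : 0 < C₂) (hζlow : 0 < ζlow) (hζord : ζlow ≤ ζbar)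
    (Nmax : ℕ) (hNmax : 1 ≤ Nmax)
    (F : ℕ → EuclideanSpace ℝ (Fin n) → ℝ)
    (hFconv : ∀ N : ℕ, 1 ≤ N → N ≤ Nmax → ConvexOn ℝ Set.univ (F N))
    (hFattain : ∀ N : ℕ, 1 ≤ N → N ≤ Nmax → ∃ xs ∈ Ω, ∀ y ∈ Ω, F N xs ≤ F N y)
    (x g : ℕ → EuclideanSpace ℝ (Fin n)) (N : ℕ → ℕ) (α ζ : ℕ → ℝ)
    (hx1 : x 1 ∈ Ω) (hN1 : 1 ≤ N 1) (hN1max : N 1 ≤ Nmax)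
    (hg : ∀ k : ℕ, 1 ≤ k → ∀ y, F (N k) (x k) + ⟪g k, y - x k⟫ ≤ F (N k) y)
    (hζ : ∀ k : ℕ, 1 ≤ k → ζlow ≤ ζ k ∧ ζ k ≤ ζbar)
    (hα : ∀ k : ℕ, 1 ≤ k → 1 / (k : ℝ) ≤ α k ∧ α k ≤ C₂ / k)
    (hupd : ∀ k : ℕ, 1 ≤ k →
      x (k + 1) = P (x k - (α k * ζ k * (max 1 ‖g k‖)⁻¹) • g k))
    (hNup : ∀ k : ℕ, 1 ≤ k →
      (‖x (k + 1) - x k‖ < ((Nmax : ℝ) - N k) / Nmax →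
        N k < N (k + 1) ∧ N (k + 1) ≤ Nmax) ∧
      (¬ (‖x (k + 1) - x k‖ < ((Nmax : ℝ) - N k) / Nmax) → N (k + 1) = N k)) :
    (∃ k₀ : ℕ, ∀ k : ℕ, k₀ ≤ k → N k = Nmax) ∧
    ∃ xtil ∈ Ω, (∀ y ∈ Ω, F Nmax xtil ≤ F Nmax y) ∧
      Filter.Tendsto x Filter.atTop (nhds xtil) :=
  stmt_12_general Ω hΩclosed P hPnonexp hPmem hPfix C₂ ζlow ζbar hζlow Nmax hNmax F hFconv hFattain
    x g N α ζ hx1 hN1max hg hζ hα hupd hNup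
end

section
/- Iteration bound to reach the full sample (first part of the proof of Theorem 4): let N_max ≥ 1 be an integer, r > 1, C₂ > 0, ζ̄ > 0. Let (N_k)_{k≥1} be a nondecreasing sequence of positive integers with 1 ≤ N_1 and N_k ≤ N_max for all k, and let (θ_k)_{k≥1} be reals with 0 ≤ θ_k ≤ C₂·ζ̄/k for all k ≥ 1. Suppose for every k ≥ 1: if θ_k < (N_max − N_k)/N_max then N_{k+1} ≥ min(r·N_k, N_max), and otherwise N_{k+1} = N_k. Then N_k = N_max for every k ≥ (⌈C₂·ζ̄·N_max⌉ + 1)·(1 + log(N_max/N_1)/log(r)). -/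
/-- Iteration bound to reach the full sample (first part of the proof of Theorem 4). -/
theorem stmt_14 (Nmax : ℕ) (hNmax : 1 ≤ Nmax) (r C₂ ζbar : ℝ)
    (hr : 1 < r) (hC₂ : 0 < C₂) (hζbar : 0 < ζbar)
    (N : ℕ → ℕ) (θ : ℕ → ℝ)
    (hmono : Monotone N) (hN1 : 1 ≤ N 1) (hbound : ∀ k, N k ≤ Nmax)
    (hθ : ∀ k : ℕ, 1 ≤ k → 0 ≤ θ k ∧ θ k ≤ C₂ * ζbar / k)
    (hNup : ∀ k : ℕ, 1 ≤ k →
      (θ k < ((Nmax : ℝ) - N k) / Nmax →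
        min (r * N k) (Nmax : ℝ) ≤ (N (k + 1) : ℝ)) ∧
      (¬ (θ k < ((Nmax : ℝ) - N k) / Nmax) → N (k + 1) = N k)) :
    ∀ k : ℕ, ((⌈C₂ * ζbar * Nmax⌉₊ + 1 : ℝ) *
        (1 + Real.log ((Nmax : ℝ) / (N 1 : ℝ)) / Real.log r) ≤ (k : ℝ)) →
      N k = Nmax := by
  intro k hk
  set K : ℕ := ⌈C₂ * ζbar * Nmax⌉₊ + 1 with hKdef
  have hK1 : 1 ≤ K := Nat.le_add_left 1 _
  have hrpos : (0:ℝ) < r := by linarith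
  have hNmaxR : (1:ℝ) ≤ (Nmax:ℝ) := by exact_mod_cast hNmax
  have hN1pos : (0:ℝ) < (N 1 : ℝ) := by exact_mod_cast hN1
  have hN1le : (N 1 : ℝ) ≤ (Nmax:ℝ) := by exact_mod_cast hbound 1
  have hlogr : 0 < Real.log r := Real.log_pos hr
  set L : ℝ := Real.log ((Nmax : ℝ) / (N 1 : ℝ)) / Real.log r with hLdef
  have hLnn : 0 ≤ L := by
    apply div_nonneg _ hlogr.le
    apply Real.log_nonneg
    rw [le_div_iff₀ hN1pos]; linarith
  -- key growth lemma
  have key : ∀ m : ℕ, min (r ^ m * (N K : ℝ)) (Nmax:ℝ) ≤ (N (K + m) : ℝ) := by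
    intro m
    induction m with
    | zero => simpa using min_le_left ((N K : ℝ)) (Nmax:ℝ)
    | succ m ih =>
      have hj1 : 1 ≤ K + m := le_trans hK1 (Nat.le_add_right _ _)
      have hjpos : (0:ℝ) < ((K + m : ℕ) : ℝ) := by exact_mod_cast hj1
      have hCK : C₂ * ζbar * Nmax < ((K + m : ℕ) : ℝ) := by
        have h1 : C₂ * ζbar * Nmax ≤ (⌈C₂ * ζbar * Nmax⌉₊ : ℝ) := Nat.le_ceil _
        have h2 : ((K:ℕ):ℝ) = (⌈C₂ * ζbar * Nmax⌉₊ : ℝ) + 1 := by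
          rw [hKdef]; push_cast; ring
        have h3 : ((K:ℕ):ℝ) ≤ ((K + m : ℕ):ℝ) := by exact_mod_cast Nat.le_add_right K m
        linarith
      by_cases hfull : N (K + m) = Nmax
      · have hnot : ¬ (θ (K+m) < ((Nmax:ℝ) - (N (K+m):ℝ)) / Nmax) := by
          rw [hfull]
          simp only [sub_self, zero_div, not_lt]
          exact (hθ _ hj1).1
        have heq := (hNup (K+m) hj1).2 hnot
        have : K + (m+1) = (K+m)+1 := rfl
        rw [this, heq, hfull]
        exact min_le_right _ _
      · have hltn : N (K+m) < Nmax := lt_of_le_of_ne (hbound _) hfull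
        have hθlt : θ (K+m) < ((Nmax:ℝ) - (N (K+m):ℝ)) / Nmax := by
          have h1 : θ (K+m) ≤ C₂ * ζbar / ((K+m:ℕ):ℝ) := by
            have := (hθ _ hj1).2
            exact_mod_cast this
          have h2 : C₂ * ζbar / ((K+m:ℕ):ℝ) < 1 / (Nmax:ℝ) := by
            rw [div_lt_div_iff₀ hjpos (by linarith)]
            linarith
          have h4 : (1:ℝ) ≤ (Nmax:ℝ) - (N (K+m):ℝ) := by
            have : (N (K+m):ℝ) + 1 ≤ (Nmax:ℝ) := by exact_mod_cast hltn
            linarith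
          have h3 : (1:ℝ)/(Nmax:ℝ) ≤ ((Nmax:ℝ) - (N (K+m):ℝ))/(Nmax:ℝ) := by
            gcongr
          linarith
        have hup := (hNup (K+m) hj1).1 hθlt
        have h5 : min (r^(m+1) * (N K:ℝ)) (Nmax:ℝ) ≤ r * (N (K+m):ℝ) := by
          have h6 : r * min (r^m * (N K:ℝ)) (Nmax:ℝ) ≤ r * (N (K+m):ℝ) :=
            mul_le_mul_of_nonneg_left ih hrpos.le
          have h7 : r * min (r^m * (N K:ℝ)) (Nmax:ℝ)
              = min (r * (r^m * (N K:ℝ))) (r * (Nmax:ℝ)) := by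
            exact mul_min_of_nonneg _ _ hrpos.le
          have h8 : min (r^(m+1) * (N K:ℝ)) (Nmax:ℝ)
              ≤ min (r * (r^m * (N K:ℝ))) (r * (Nmax:ℝ)) := by
            apply le_min
            · apply min_le_left _ _ |>.trans
              apply le_of_eq; ring
            · have : (Nmax:ℝ) ≤ r * Nmax := by nlinarith
              exact (min_le_right _ _).trans this
          calc min (r^(m+1) * (N K:ℝ)) (Nmax:ℝ)
              ≤ r * min (r^m * (N K:ℝ)) (Nmax:ℝ) := by rw [h7]; exact h8
            _ ≤ r * (N (K+m):ℝ) := h6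
        have h9 : min (r^(m+1) * (N K:ℝ)) (Nmax:ℝ) ≤ min (r * (N (K+m):ℝ)) (Nmax:ℝ) :=
          le_min h5 (min_le_right _ _)
        have : K + (m+1) = (K+m)+1 := rfl
        rw [this]
        exact h9.trans hup
  -- now finish
  have hKk : K ≤ k := by
    have hKR : (1:ℝ) ≤ (K:ℝ) := by exact_mod_cast hK1
    have : (K:ℝ) ≤ (K:ℝ) * (1 + L) := by nlinarith
    have hkK : (K:ℝ) ≤ (k:ℝ) := by
      have h2 : ((⌈C₂ * ζbar * Nmax⌉₊:ℝ) + 1) = (K:ℝ) := by rw [hKdef]; push_cast; ring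
      calc (K:ℝ) ≤ (K:ℝ) * (1 + L) := this
        _ ≤ (k:ℝ) := by rw [← h2] at *; exact hk
    exact_mod_cast hkK
  set m : ℕ := k - K with hmdef
  have hkm : k = K + m := by omega
  have hmL : L ≤ (m:ℝ) := by
    have hKR : (1:ℝ) ≤ (K:ℝ) := by exact_mod_cast hK1
    have h2 : ((⌈C₂ * ζbar * Nmax⌉₊:ℝ) + 1) = (K:ℝ) := by rw [hKdef]; push_cast; ring
    have hk' : (K:ℝ) * (1 + L) ≤ (k:ℝ) := by rw [← h2]; exact hk
    have hmr : (m:ℝ) = (k:ℝ) - (K:ℝ) := by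
      rw [hkm]; push_cast; ring
    rw [hmr]; nlinarith
  have hrm : (Nmax:ℝ) ≤ r^m * (N K:ℝ) := by
    have hdivpos : (0:ℝ) < (Nmax:ℝ)/(N 1:ℝ) := by positivity
    have h1 : Real.log ((Nmax:ℝ)/(N 1:ℝ)) ≤ (m:ℝ) * Real.log r := by
      rw [hLdef] at hmL
      rw [div_le_iff₀ hlogr] at hmL
      linarith
    have h2 : Real.log (r^m) = (m:ℝ) * Real.log r := Real.log_pow r m
    have h3 : (Nmax:ℝ)/(N 1:ℝ) ≤ r^m := by
      have := h1.trans_eq h2.symm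
      have hrmpos : (0:ℝ) < r^m := pow_pos hrpos m
      exact (Real.log_le_log_iff hdivpos hrmpos).mp this
    have h4 : (Nmax:ℝ) ≤ r^m * (N 1:ℝ) := by
      rw [div_le_iff₀ hN1pos] at h3; linarith
    have h5 : (N 1:ℝ) ≤ (N K:ℝ) := by exact_mod_cast hmono hK1
    nlinarith [pow_pos hrpos m]
  have hfinal : (Nmax:ℝ) ≤ (N k:ℝ) := by
    rw [hkm]
    have := key m
    rw [min_eq_right hrm] at this
    exact this
  have : Nmax ≤ N k := by exact_mod_cast hfinal
  exact le_antisymm (hbound k) this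
end
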